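/- arXiv:2205.01535 — 3 statements merged into one kernel-verified Lean document; each statement's English description precedes it below -/
import Mathlib

section
/- In the setting of the separation theorem for a single real pole s with s ∈ (θ_1, θ_m), the accumulated quadrature weights satisfy μ_n([θ_1, θ_k]) ≤ |c_1|² + ... + |c_k|² ≤ μ_n((−∞, θ_{k+1}) ∪ (θ_m, ∞)) for k = 1,...,m−1, where μ_n(R) = ∑_{j: λ_j ∈ R} |w_j|². -/
/-!
Write `t = (x - s)⁻¹`. If `deg q ≤ N`, then `p = (reflect N q).comp (X - C s)` has degree `≤ N` and
`p(x) / (x - s)^N = q(t)`, so both quadratures integrate every polynomial in `t` of degree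
`≤ N = 2m - 2` alike. For a block `[α, β]` with nodes as endpoints, `x ↦ t` maps the block to an
interval, or to two rays when `s` lies in the block, and the other nodes outside of it. A
polynomial in `t` of degree `≤ 2m - 2` that is `≥ 0`, is `≥ 1` on the image of the block, and is
`1` at the nodes of the block and `0` at the other nodes, integrated against both quadratures,
gives `μ_n([α, β]) ≤ ∑_{θ_j ∈ [α, β]} |c_j|²`.

Such polynomials are built from one-sided ones: for nodes `A ≤ a < B`, the Hermite interpolant `q`
with `q = 1` on `A`, `q = 0` on `B` and `q' = 0` at every node but `a`. By Rolle, `q'` also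
vanishes strictly inside each gap between two nodes of `A` or two nodes of `B`; these are already
`deg q'` roots, so they are all of them and all simple. This fixes the sign of `q'` on every gap,
whence `q ≥ 0`, and `q ≥ 1` left of `a`.

The upper bound is the lower bound for the block `[θ_{k+1}, θ_m]` combined with equal total mass.
-/

open Polynomial Set
open scoped Finset

theorem Polynomial.exists_dvd_and_dvd_sub_one {R : Type*} [CommRing R] {f g : R[X]}
    (h : IsCoprime f g) (hg : g.Monic) (hg1 : g ≠ 1) :
    ∃ q : R[X], q.natDegree < f.natDegree + g.natDegree ∧ f ∣ q ∧ g ∣ q - 1 := by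
  obtain ⟨u, v, huv⟩ := h
  refine ⟨u %ₘ g * f, ?_, dvd_mul_left _ _, -(u /ₘ g) * f - v, ?_⟩
  · have := natDegree_modByMonic_lt u hg hg1
    have := natDegree_mul_le (p := u %ₘ g) (q := f)
    omega
  · linear_combination f * modByMonic_add_div u g + huv

theorem Polynomial.eval_derivative_eq_zero_of_sq_dvd {R : Type*} [CommRing R] {p : R[X]} {x : R}
    (h : (X - C x) ^ 2 ∣ p) : p.derivative.eval x = 0 :=
  dvd_iff_isRoot.mp (by simpa using pow_sub_one_dvd_derivative_of_pow_dvd h)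

theorem Polynomial.isCoprime_X_sub_C_of_ne {K : Type*} [Field K] {a b : K} (h : a ≠ b) :
    IsCoprime (X - C a) (X - C b) :=
  isCoprime_X_sub_C_of_isUnit_sub (sub_ne_zero.2 h).isUnit

theorem Polynomial.monotoneOn_eval_of_derivative_nonneg {p : ℝ[X]} {D : Set ℝ} (hD : Convex ℝ D)
    (h : ∀ x ∈ interior D, 0 ≤ p.derivative.eval x) : MonotoneOn (fun x => p.eval x) D :=
  monotoneOn_of_deriv_nonneg hD p.continuous.continuousOn p.differentiable.differentiableOn
    fun x hx => (p.deriv (x := x)).symm ▸ h x hx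

theorem Polynomial.antitoneOn_eval_of_derivative_nonpos {p : ℝ[X]} {D : Set ℝ} (hD : Convex ℝ D)
    (h : ∀ x ∈ interior D, p.derivative.eval x ≤ 0) : AntitoneOn (fun x => p.eval x) D :=
  antitoneOn_of_deriv_nonpos hD p.continuous.continuousOn p.differentiable.differentiableOn
    fun x hx => (p.deriv (x := x)).symm ▸ h x hx

theorem Polynomial.isCoprime_X_sub_C_mul_X_sub_C {K : Type*} [Field K] {a b c d : K}
    (hac : a ≠ c) (had : a ≠ d) (hbc : b ≠ c) (hbd : b ≠ d) :
    IsCoprime ((X - C a) * (X - C b)) ((X - C c) * (X - C d)) :=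
  ((isCoprime_X_sub_C_of_ne hac).mul_right (isCoprime_X_sub_C_of_ne had)).mul_left
    ((isCoprime_X_sub_C_of_ne hbc).mul_right (isCoprime_X_sub_C_of_ne hbd))

theorem Polynomial.eval_reflect_comp_div_pow {K : Type*} [Field K] {q : K[X]} {N : ℕ}
    (hq : q.natDegree ≤ N) {s x : K}
    (hx : x ≠ s) : ((reflect N q).comp (X - C s)).eval x / (x - s) ^ N = q.eval (x - s)⁻¹ := by
  have hxs := sub_ne_zero.2 hx
  let := invertibleOfNonzero hxs
  have := eval₂_reflect_mul_pow (RingHom.id K) (x - s) N (reflect N q)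
    (natDegree_reflect_le.trans (max_le le_rfl hq))
  rw [reflect_reflect, invOf_eq_inv] at this
  simp only [eval₂_id] at this
  rw [eval_comp, eval_sub, eval_X, eval_C, ← this, mul_div_cancel_right₀ _ (pow_ne_zero N hxs)]

theorem Polynomial.natDegree_reflect_comp_le {K : Type*} [Field K] {q : K[X]} {N : ℕ}
    (hq : q.natDegree ≤ N) (s : K) :
    ((reflect N q).comp (X - C s)).natDegree ≤ N := by
  rw [natDegree_comp, natDegree_X_sub_C, mul_one]
  exact natDegree_reflect_le.trans (max_le le_rfl hq)

theorem min_le_of_monotoneOn_of_antitoneOn {α β : Type*} [LinearOrder α] [LinearOrder β]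
    {f : α → β} {a z b x : α} (h₁ : MonotoneOn f (Icc a z)) (h₂ : AntitoneOn f (Icc z b))
    (haz : a ≤ z) (hzb : z ≤ b) (hx : x ∈ Icc a b) : min (f a) (f b) ≤ f x := by
  rcases le_total x z with h | h
  · exact min_le_of_left_le (h₁ ⟨le_rfl, haz⟩ ⟨hx.1, h⟩ hx.1)
  · exact min_le_of_right_le (h₂ ⟨h, hx.2⟩ ⟨hzb, le_rfl⟩ hx.2)

theorem prod_sub_mul_sub_pos {ι : Type*} {I : Finset ι} {y z : ι → ℝ} {x : ℝ}
    (h : ∀ i ∈ I, x ∉ Icc (y i) (z i)) (hyz : ∀ i ∈ I, y i ≤ z i) :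
    0 < ∏ i ∈ I, (x - y i) * (x - z i) := by
  refine Finset.prod_pos fun i hi => ?_
  have := hyz i hi
  rcases not_and_or.mp (h i hi) with h | h <;> simp only [not_le] at h
  · exact mul_pos_of_neg_of_neg (by linarith) (by linarith)
  · exact mul_pos (by linarith) (by linarith)

namespace Finset

variable {α : Type*} [LinearOrder α] {S : Finset α} {u v x : α}

noncomputable def nextGT (S : Finset α) (u : α) : α :=
  if h : (S.filter (u < ·)).Nonempty then (S.filter (u < ·)).min' h else u

theorem nextGT_spec (hv : v ∈ S) (huv : u < v) :
    S.nextGT u ∈ S ∧ u < S.nextGT u ∧ S.nextGT u ≤ v := by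
  have h : (S.filter (u < ·)).Nonempty := ⟨v, mem_filter.2 ⟨hv, huv⟩⟩
  have hmem := mem_filter.1 ((S.filter (u < ·)).min'_mem h)
  rw [nextGT, dif_pos h]
  exact ⟨hmem.1, hmem.2, min'_le _ _ (mem_filter.2 ⟨hv, huv⟩)⟩

theorem nextGT_mem (hv : v ∈ S) (huv : u < v) : S.nextGT u ∈ S := (nextGT_spec hv huv).1

theorem lt_nextGT (hv : v ∈ S) (huv : u < v) : u < S.nextGT u := (nextGT_spec hv huv).2.1

theorem nextGT_le (hv : v ∈ S) (huv : u < v) : S.nextGT u ≤ v := (nextGT_spec hv huv).2.2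

theorem exists_le_and_forall_lt (hS : ∃ u ∈ S, u ≤ x) :
    ∃ u ∈ S, u ≤ x ∧ ∀ v ∈ S, u < v → x < v := by
  obtain ⟨u, hu, hmax⟩ :=
    (S.filter (· ≤ x)).exists_max_image id (by simpa [Finset.Nonempty] using hS)
  refine ⟨u, (mem_filter.1 hu).1, (mem_filter.1 hu).2, fun v hv huv => ?_⟩
  by_contra! hvx
  exact not_lt_of_ge (hmax v (mem_filter.2 ⟨hv, hvx⟩)) huv

theorem nextGT_le_or_nextGT_le (hu : u ∈ S) (hv : v ∈ S) (hne : u ≠ v) :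
    S.nextGT u ≤ v ∨ S.nextGT v ≤ u := by
  rcases hne.lt_or_gt with h | h
  · exact Or.inl (S.nextGT_le hv h)
  · exact Or.inr (S.nextGT_le hu h)

theorem notMem_Icc_of_mem_Ioo_nextGT {u₀ z : α} (hu₀ : u₀ ∈ S) (hu : u ∈ S) (hne : u ≠ u₀)
    (hx : x ∈ Set.Ioo u₀ (S.nextGT u₀))
    (hz : z < S.nextGT u) : x ∉ Set.Icc u z := by
  rintro ⟨h₁, h₂⟩
  rcases nextGT_le_or_nextGT_le hu hu₀ hne with h | h
  · exact lt_irrefl x (((h₂.trans_lt hz).trans_le h).trans hx.1)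
  · exact lt_irrefl u (h₁.trans_lt (hx.2.trans_le h))

end Finset

theorem Finset.prod_sub_mul_sub_pos_of_mem_Ioo_nextGT {S I : Finset ℝ} (hI : I ⊆ S)
    {z : ℝ → ℝ} (hz : ∀ u ∈ I, z u ∈ Set.Ioo u (S.nextGT u)) {u₀ x : ℝ} (hu₀ : u₀ ∈ S)
    (hx : x ∈ Set.Ioo u₀ (S.nextGT u₀)) : 0 < ∏ u ∈ I.erase u₀, (x - u) * (x - z u) := by
  refine prod_sub_mul_sub_pos (fun u hu => ?_) fun u hu => (hz u (mem_of_mem_erase hu)).1.le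
  exact notMem_Icc_of_mem_Ioo_nextGT hu₀ (hI (mem_of_mem_erase hu)) (ne_of_mem_erase hu) hx
    (hz u (mem_of_mem_erase hu)).2

structure IsStepInterpolant (A B : Finset ℝ) (a b : ℝ) (q : ℝ[X]) : Prop where
  mem_left : a ∈ A
  le_of_mem_left : ∀ x ∈ A, x ≤ a
  mem_right : b ∈ B
  mem_Ioc_of_mem_right : ∀ x ∈ B, x ∈ Ioc a b
  natDegree_le : q.natDegree ≤ 2 * (#A + #B) - 2
  eval_left : ∀ x ∈ A, q.eval x = 1
  eval_right : ∀ x ∈ B, q.eval x = 0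
  derivative_eval : ∀ x ∈ A ∪ B, x ≠ a → q.derivative.eval x = 0

theorem exists_isStepInterpolant {A B : Finset ℝ} {a b : ℝ} (ha : a ∈ A) (hA : ∀ x ∈ A, x ≤ a)
    (hb : b ∈ B) (hB : ∀ x ∈ B, x ∈ Ioc a b) : ∃ q, IsStepInterpolant A B a b q := by
  classical
  set π := ∏ x ∈ A.erase a, (X - C x)
  set ρ := (∏ x ∈ B, (X - C x)) ^ 2
  set ω := (X - C a) * π ^ 2
  have hωm : ω.Monic := (monic_X_sub_C a).mul ((monic_prod_X_sub_C _ _).pow 2)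
  have hA₀ := Finset.card_pos.2 ⟨a, ha⟩
  have hω : ω.natDegree = 2 * #A - 1 := by
    rw [(monic_X_sub_C a).natDegree_mul' (pow_ne_zero 2 (monic_prod_X_sub_C _ _).ne_zero)]
    simp [Finset.card_erase_of_mem ha]
    omega
  have hcop : IsCoprime ρ ω := by
    refine .pow_left <| .prod_left fun y hy =>
      .mul_right ?_ (.pow_right <| .prod_right fun x hx => ?_)
    · exact isCoprime_X_sub_C_of_ne (hB y hy).1.ne'
    · exact isCoprime_X_sub_C_of_ne ((hA x (Finset.mem_of_mem_erase hx)).trans_lt (hB y hy).1).ne'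
  obtain ⟨q, hdeg, hρq, hωq⟩ := exists_dvd_and_dvd_sub_one hcop hωm
    (fun h => by rw [h, natDegree_one] at hω; omega)
  have hsqB : ∀ x ∈ B, (X - C x) ^ 2 ∣ q :=
    fun x hx => (pow_dvd_pow_of_dvd (Finset.dvd_prod_of_mem (fun x => X - C x) hx) 2).trans hρq
  have hsqA : ∀ x ∈ A, x ≠ a → (X - C x) ^ 2 ∣ q - 1 := fun x hx hxa =>
    ((pow_dvd_pow_of_dvd (Finset.dvd_prod_of_mem (fun x => X - C x)
      (Finset.mem_erase.2 ⟨hxa, hx⟩)) 2).trans (dvd_mul_left _ _)).trans hωq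
  refine ⟨q, ha, hA, hb, hB, ?_, fun x hx => ?_, fun x hx => ?_, fun x hx hxa => ?_⟩
  · simp [ρ, hω] at hdeg
    omega
  · by_cases hxa : x = a
    · subst hxa
      have := dvd_iff_isRoot.1 ((dvd_mul_right _ _).trans hωq)
      simpa [sub_eq_zero] using this
    · have := dvd_iff_isRoot.1 ((dvd_pow_self _ two_ne_zero).trans (hsqA x hx hxa))
      simpa [sub_eq_zero] using this
  · exact dvd_iff_isRoot.1 ((dvd_pow_self _ two_ne_zero).trans (hsqB x hx))
  · rcases Finset.mem_union.1 hx with hx | hx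
    · simpa using eval_derivative_eq_zero_of_sq_dvd (hsqA x hx hxa)
    · exact eval_derivative_eq_zero_of_sq_dvd (hsqB x hx)

namespace IsStepInterpolant

variable {A B : Finset ℝ} {a b : ℝ} {q : ℝ[X]}

theorem mem_left_iff (hq : IsStepInterpolant A B a b q) {x : ℝ} (hx : x ∈ A ∪ B) :
    x ∈ A ↔ x ≤ a := by
  refine ⟨hq.le_of_mem_left x, fun hxa => ?_⟩
  rcases Finset.mem_union.1 hx with h | h
  · exact h
  · exact absurd (hq.mem_Ioc_of_mem_right x h).1 (not_lt_of_ge hxa)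

theorem le_right (hq : IsStepInterpolant A B a b q) {x : ℝ} (hx : x ∈ A ∪ B) : x ≤ b := by
  rcases Finset.mem_union.1 hx with h | h
  · exact (hq.le_of_mem_left x h).trans (hq.mem_Ioc_of_mem_right b hq.mem_right).1.le
  · exact (hq.mem_Ioc_of_mem_right x h).2

theorem eval_nonneg_of_mem (hq : IsStepInterpolant A B a b q) {x : ℝ} (hx : x ∈ A ∪ B) :
    0 ≤ q.eval x := by
  rcases Finset.mem_union.1 hx with h | h
  · simp [hq.eval_left x h]
  · simp [hq.eval_right x h]

theorem exists_derivative_roots (hq : IsStepInterpolant A B a b q) :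
    ∃ z : ℝ → ℝ, ∀ u ∈ ((A ∪ B).erase b).erase a,
      z u ∈ Ioo u ((A ∪ B).nextGT u) ∧ q.derivative.eval (z u) = 0 := by
  have key : ∀ u ∈ ((A ∪ B).erase b).erase a,
      ∃ z ∈ Ioo u ((A ∪ B).nextGT u), q.derivative.eval z = 0 := by
    intro u hu
    obtain ⟨hua, hub, hu⟩ : u ≠ a ∧ u ≠ b ∧ u ∈ A ∪ B := by simpa using hu
    have hbS := Finset.mem_union_right A hq.mem_right
    have hub' := (hq.le_right hu).lt_of_ne hub
    have hn := Finset.nextGT_mem hbS hub'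
    have hun := Finset.lt_nextGT hbS hub'
    have heq : q.eval u = q.eval ((A ∪ B).nextGT u) := by
      by_cases huA : u ∈ A
      · have hua' := (hq.le_of_mem_left u huA).lt_of_ne hua
        have hnA := (hq.mem_left_iff hn).2
          (Finset.nextGT_le (Finset.mem_union_left B hq.mem_left) hua')
        rw [hq.eval_left u huA, hq.eval_left _ hnA]
      · have huB : u ∈ B := (Finset.mem_union.1 hu).resolve_left huA
        have hnB : (A ∪ B).nextGT u ∈ B := by
          refine (Finset.mem_union.1 hn).resolve_left fun hnA => ?_
          exact huA ((hq.mem_left_iff hu).2 (hun.le.trans (hq.le_of_mem_left _ hnA)))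
        rw [hq.eval_right u huB, hq.eval_right _ hnB]
    obtain ⟨z, hz, hz0⟩ := exists_deriv_eq_zero hun q.continuous.continuousOn heq
    exact ⟨z, hz, by rwa [Polynomial.deriv] at hz0⟩
  choose! z hz hz0 using key
  exact ⟨z, fun u hu => ⟨hz u hu, hz0 u hu⟩⟩

theorem lt_right (hq : IsStepInterpolant A B a b q) : a < b :=
  (hq.mem_Ioc_of_mem_right b hq.mem_right).1

theorem card_union (hq : IsStepInterpolant A B a b q) : #(A ∪ B) = #A + #B :=
  Finset.card_union_of_disjoint <| Finset.disjoint_left.2 fun x hxA hxB =>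
    absurd (hq.mem_Ioc_of_mem_right x hxB).1 (not_lt_of_ge (hq.le_of_mem_left x hxA))

theorem mem_and_lt_right_of_mem_erase (hq : IsStepInterpolant A B a b q) {u : ℝ}
    (hu : u ∈ ((A ∪ B).erase b).erase a) : u ∈ A ∪ B ∧ u < b := by
  obtain ⟨-, hub, hu⟩ : u ≠ a ∧ u ≠ b ∧ u ∈ A ∪ B := by simpa using hu
  exact ⟨hu, (hq.le_right hu).lt_of_ne hub⟩

theorem prod_dvd_derivative (hq : IsStepInterpolant A B a b q) {z : ℝ → ℝ}
    (hz : ∀ u ∈ ((A ∪ B).erase b).erase a,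
      z u ∈ Ioo u ((A ∪ B).nextGT u) ∧ q.derivative.eval (z u) = 0) :
    (X - C b) * ∏ u ∈ ((A ∪ B).erase b).erase a, (X - C u) * (X - C (z u)) ∣ q.derivative := by
  set I := ((A ∪ B).erase b).erase a
  have hbS := Finset.mem_union_right A hq.mem_right
  have hI := fun u (hu : u ∈ I) => hq.mem_and_lt_right_of_mem_erase hu
  have hzlt : ∀ u ∈ I, ∀ v ∈ A ∪ B, u < v → z u < v := fun u hu v hv huv =>
    (hz u hu).1.2.trans_le (Finset.nextGT_le hv huv)
  have hpair : ∀ u ∈ I, ∀ v ∈ I, u < v →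
      IsCoprime ((X - C u) * (X - C (z u))) ((X - C v) * (X - C (z v))) := by
    intro u hu v hv huv
    have h₁ := hzlt u hu v (hI v hv).1 huv
    have h₂ := (hz v hv).1.1
    exact isCoprime_X_sub_C_mul_X_sub_C huv.ne (huv.trans h₂).ne h₁.ne (h₁.trans h₂).ne
  refine IsCoprime.mul_dvd ?_ (dvd_iff_isRoot.2 (hq.derivative_eval b hbS hq.lt_right.ne'))
    (Finset.prod_dvd_of_coprime (fun u hu v hv huv => ?_) fun u hu => ?_)
  · exact .prod_right fun u hu => (isCoprime_X_sub_C_of_ne (hI u hu).2.ne').mul_right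
      (isCoprime_X_sub_C_of_ne (hzlt u hu b hbS (hI u hu).2).ne')
  · rcases Ne.lt_or_gt huv with h | h
    · exact hpair u hu v hv h
    · exact (hpair v hv u hu h).symm
  · exact (isCoprime_X_sub_C_of_ne (hz u hu).1.1.ne).mul_dvd
      (dvd_iff_isRoot.2 (hq.derivative_eval u (hI u hu).1 (Finset.ne_of_mem_erase hu)))
      (dvd_iff_isRoot.2 (hz u hu).2)

theorem derivative_ne_zero (hq : IsStepInterpolant A B a b q) : q.derivative ≠ 0 := by
  intro h
  have h₁ := hq.eval_left a hq.mem_left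
  have h₀ := hq.eval_right b hq.mem_right
  rw [eq_C_of_natDegree_eq_zero (derivative_eq_zero.1 h)] at h₁ h₀
  simp only [eval_C] at h₁ h₀
  exact one_ne_zero (h₁.symm.trans h₀)

/-- `q'` vanishes at the `2 (#A + #B) - 3 ≥ deg q'` distinct points `b`, `u` and `z u`. -/
theorem derivative_eq (hq : IsStepInterpolant A B a b q) {z : ℝ → ℝ}
    (hz : ∀ u ∈ ((A ∪ B).erase b).erase a,
      z u ∈ Ioo u ((A ∪ B).nextGT u) ∧ q.derivative.eval (z u) = 0) :
    ∃ c, q.derivative =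
      C c * ((X - C b) * ∏ u ∈ ((A ∪ B).erase b).erase a, (X - C u) * (X - C (z u))) := by
  set I := ((A ∪ B).erase b).erase a
  have hbS := Finset.mem_union_right A hq.mem_right
  have hA₀ := Finset.card_pos.2 ⟨a, hq.mem_left⟩
  have hB₀ := Finset.card_pos.2 ⟨b, hq.mem_right⟩
  have hcardI : #I = #A + #B - 2 := by
    rw [Finset.card_erase_of_mem (Finset.mem_erase.2 ⟨hq.lt_right.ne,
      Finset.mem_union_left B hq.mem_left⟩), Finset.card_erase_of_mem hbS, hq.card_union]
    omega
  have hq' := hq.derivative_ne_zero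
  obtain ⟨g, hg⟩ := hq.prod_dvd_derivative hz
  have hP : (X - C b) * ∏ u ∈ I, (X - C u) * (X - C (z u)) ≠ 0 := by
    rintro h
    exact hq' (by rw [hg, h, zero_mul])
  have hg₀ : g ≠ 0 := by
    rintro rfl
    exact hq' (by rw [hg, mul_zero])
  have hdeg := natDegree_derivative_le q
  rw [hg, natDegree_mul hP hg₀, Finset.prod_mul_distrib] at hdeg
  simp only [natDegree_mul (X_sub_C_ne_zero _) (mul_ne_zero (monic_prod_X_sub_C _ _).ne_zero
    (monic_prod_X_sub_C _ _).ne_zero), natDegree_mul (monic_prod_X_sub_C _ _).ne_zero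
    (monic_prod_X_sub_C _ _).ne_zero, natDegree_finsetProd_X_sub_C_eq_card, natDegree_X_sub_C,
    hcardI] at hdeg
  have hg₁ : g.natDegree = 0 := by
    have := hq.natDegree_le
    omega
  exact ⟨g.coeff 0, by rw [hg, mul_comm, ← eq_C_of_natDegree_eq_zero hg₁]⟩

theorem exists_derivative_eval_eq (hq : IsStepInterpolant A B a b q) :
    ∃ (z : ℝ → ℝ) (c : ℝ), 0 < c ∧
      (∀ u ∈ ((A ∪ B).erase b).erase a, z u ∈ Ioo u ((A ∪ B).nextGT u)) ∧
      ∀ x, q.derivative.eval x =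
        c * ((x - b) * ∏ u ∈ ((A ∪ B).erase b).erase a, (x - u) * (x - z u)) := by
  obtain ⟨z, hz⟩ := hq.exists_derivative_roots
  obtain ⟨c, hc⟩ := hq.derivative_eq hz
  have hform : ∀ x, q.derivative.eval x =
      c * ((x - b) * ∏ u ∈ ((A ∪ B).erase b).erase a, (x - u) * (x - z u)) := fun x => by
    simp [hc, eval_prod]
  refine ⟨z, c, ?_, fun u hu => (hz u hu).1, hform⟩
  -- otherwise `q` would be monotone on the gap `[a, next a]`, where it drops from `1` to `0`
  by_contra! hc₀
  have haS := Finset.mem_union_left B hq.mem_left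
  have hbS := Finset.mem_union_right A hq.mem_right
  have hn := Finset.nextGT_mem hbS hq.lt_right
  have han := Finset.lt_nextGT hbS hq.lt_right
  have hnB : (A ∪ B).nextGT a ∈ B :=
    (Finset.mem_union.1 hn).resolve_left fun h => not_le_of_gt han (hq.le_of_mem_left _ h)
  have hmono := monotoneOn_eval_of_derivative_nonneg (p := q) (convex_Icc a ((A ∪ B).nextGT a))
    fun x hx => by
      rw [interior_Icc] at hx
      have hR := Finset.prod_sub_mul_sub_pos_of_mem_Ioo_nextGT
        ((Finset.erase_subset _ _).trans (Finset.erase_subset _ _)) (fun u hu => (hz u hu).1) haS hx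
      rw [Finset.erase_idem] at hR
      rw [hform]
      have hxb : x - b < 0 := sub_neg.2 (hx.2.trans_le (Finset.nextGT_le hbS hq.lt_right))
      exact mul_nonneg_of_nonpos_of_nonpos hc₀ (mul_neg_of_neg_of_pos hxb hR).le
  have : q.eval a ≤ q.eval _ := hmono (left_mem_Icc.2 han.le) (right_mem_Icc.2 han.le) han.le
  rw [hq.eval_left a hq.mem_left, hq.eval_right _ hnB] at this
  exact absurd this (by norm_num)

theorem min_le_eval (hq : IsStepInterpolant A B a b q) {u x : ℝ} (hu : u ∈ A ∪ B) (hub : u ≠ b)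
    (hx : x ∈ Icc u ((A ∪ B).nextGT u)) :
    min (q.eval u) (q.eval ((A ∪ B).nextGT u)) ≤ q.eval x := by
  obtain ⟨z, c, hc, hz, hform⟩ := hq.exists_derivative_eval_eq
  have hbS := Finset.mem_union_right A hq.mem_right
  have hub' := (hq.le_right hu).lt_of_ne hub
  have hR := fun y (hy : y ∈ Ioo u ((A ∪ B).nextGT u)) =>
    Finset.prod_sub_mul_sub_pos_of_mem_Ioo_nextGT
      ((Finset.erase_subset _ _).trans (Finset.erase_subset _ _)) hz hu hy
  have hyb : ∀ y ∈ Ioo u ((A ∪ B).nextGT u), y - b < 0 :=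
    fun y hy => sub_neg.2 (hy.2.trans_le (Finset.nextGT_le hbS hub'))
  by_cases hua : u = a
  · subst hua
    refine min_le_of_right_le (antitoneOn_eval_of_derivative_nonpos (convex_Icc _ _)
      (fun y hy => ?_) hx (right_mem_Icc.2 (hx.1.trans hx.2)) hx.2)
    rw [interior_Icc] at hy
    have := hR y hy
    rw [Finset.erase_idem] at this
    rw [hform]
    exact (mul_neg_of_pos_of_neg hc (mul_neg_of_neg_of_pos (hyb y hy) this)).le
  · have huI : u ∈ ((A ∪ B).erase b).erase a := by simp [hu, hua, hub]
    have hsplit := fun y => (Finset.mul_prod_erase _ (fun v => (y - v) * (y - z v)) huI).symm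
    refine min_le_of_monotoneOn_of_antitoneOn
      (monotoneOn_eval_of_derivative_nonneg (convex_Icc _ _) fun y hy => ?_)
      (antitoneOn_eval_of_derivative_nonpos (convex_Icc _ _) fun y hy => ?_)
      (hz u huI).1.le (hz u huI).2.le hx
    · rw [interior_Icc] at hy
      have hy' : y ∈ Ioo u ((A ∪ B).nextGT u) := ⟨hy.1, hy.2.trans (hz u huI).2⟩
      have hpair : (y - u) * (y - z u) < 0 :=
        mul_neg_of_pos_of_neg (sub_pos.2 hy.1) (sub_neg.2 hy.2)
      rw [hform, hsplit]
      exact (mul_pos hc (mul_pos_of_neg_of_neg (hyb y hy')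
        (mul_neg_of_neg_of_pos hpair (hR y hy')))).le
    · rw [interior_Icc] at hy
      have hy' : y ∈ Ioo u ((A ∪ B).nextGT u) := ⟨(hz u huI).1.trans hy.1, hy.2⟩
      have hpair : 0 < (y - u) * (y - z u) :=
        mul_pos (sub_pos.2 ((hz u huI).1.trans hy.1)) (sub_pos.2 hy.1)
      rw [hform, hsplit]
      exact (mul_neg_of_pos_of_neg hc (mul_neg_of_neg_of_pos (hyb y hy')
        (mul_pos hpair (hR y hy')))).le

theorem one_le_eval_of_forall_le (hq : IsStepInterpolant A B a b q) {x : ℝ}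
    (hx : ∀ u ∈ A ∪ B, x ≤ u) : 1 ≤ q.eval x := by
  obtain ⟨z, c, hc, hz, hform⟩ := hq.exists_derivative_eval_eq
  have hS : (A ∪ B).Nonempty := ⟨a, Finset.mem_union_left B hq.mem_left⟩
  have hm := (A ∪ B).min'_mem hS
  have hanti := antitoneOn_eval_of_derivative_nonpos (p := q) (convex_Iic ((A ∪ B).min' hS))
    fun y hy => by
      rw [interior_Iic] at hy
      have hR : 0 < ∏ u ∈ ((A ∪ B).erase b).erase a, (y - u) * (y - z u) :=
        prod_sub_mul_sub_pos (fun u hu h => not_lt_of_ge h.1 (hy.trans_le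
          ((A ∪ B).min'_le u (Finset.mem_of_mem_erase (Finset.mem_of_mem_erase hu)))))
          fun u hu => (hz u hu).1.le
      rw [hform]
      exact (mul_neg_of_pos_of_neg hc (mul_neg_of_neg_of_pos
        (sub_neg.2 (hy.trans_le (hq.le_right hm))) hR)).le
  have : q.eval _ ≤ q.eval x := hanti (hx _ hm) self_mem_Iic (hx _ hm)
  rwa [hq.eval_left _ ((hq.mem_left_iff hm).2 ((A ∪ B).min'_le a
    (Finset.mem_union_left B hq.mem_left)))] at this

theorem eval_nonneg_of_right_le (hq : IsStepInterpolant A B a b q) {x : ℝ} (hx : b ≤ x) :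
    0 ≤ q.eval x := by
  obtain ⟨z, c, hc, hz, hform⟩ := hq.exists_derivative_eval_eq
  have hbS := Finset.mem_union_right A hq.mem_right
  have hmono := monotoneOn_eval_of_derivative_nonneg (p := q) (convex_Ici b) fun y hy => by
    rw [interior_Ici] at hy
    have hR : 0 < ∏ u ∈ ((A ∪ B).erase b).erase a, (y - u) * (y - z u) := by
      refine prod_sub_mul_sub_pos (fun u hu h => not_lt_of_ge h.2 ?_) fun u hu => (hz u hu).1.le
      have hub := (hq.mem_and_lt_right_of_mem_erase hu).2
      exact ((hz u hu).2.trans_le (Finset.nextGT_le hbS hub)).trans_le hy.le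
    rw [hform]
    exact (mul_pos hc (mul_pos (sub_pos.2 hy) hR)).le
  have : q.eval b ≤ q.eval x := hmono self_mem_Ici hx hx
  rwa [hq.eval_right b hq.mem_right] at this

theorem eval_nonneg (hq : IsStepInterpolant A B a b q) (x : ℝ) : 0 ≤ q.eval x := by
  by_cases h : ∃ u ∈ A ∪ B, u ≤ x
  · obtain ⟨u, hu, hux, hmax⟩ := Finset.exists_le_and_forall_lt h
    by_cases hub : u = b
    · exact hq.eval_nonneg_of_right_le (hub ▸ hux)
    · have hbS := Finset.mem_union_right A hq.mem_right
      have hub' := (hq.le_right hu).lt_of_ne hub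
      have hn := Finset.nextGT_mem hbS hub'
      exact (le_min (hq.eval_nonneg_of_mem hu) (hq.eval_nonneg_of_mem hn)).trans
        (hq.min_le_eval hu hub ⟨hux, (hmax _ hn (Finset.lt_nextGT hbS hub')).le⟩)
  · push Not at h
    exact zero_le_one.trans (hq.one_le_eval_of_forall_le fun u hu => (h u hu).le)

theorem one_le_eval (hq : IsStepInterpolant A B a b q) {x : ℝ} (hx : x ≤ a) : 1 ≤ q.eval x := by
  rcases hx.lt_or_eq with hx | rfl
  · by_cases h : ∃ u ∈ A ∪ B, u ≤ x
    · obtain ⟨u, hu, hux, hmax⟩ := Finset.exists_le_and_forall_lt h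
      have haS := Finset.mem_union_left B hq.mem_left
      have hua := hux.trans_lt hx
      have hn := Finset.nextGT_mem haS hua
      have := hq.min_le_eval hu (hua.trans hq.lt_right).ne
        ⟨hux, (hmax _ hn (Finset.lt_nextGT haS hua)).le⟩
      rwa [hq.eval_left u ((hq.mem_left_iff hu).2 hua.le),
        hq.eval_left _ ((hq.mem_left_iff hn).2 (Finset.nextGT_le haS hua)), min_self] at this
    · push Not at h
      exact hq.one_le_eval_of_forall_le fun u hu => (h u hu).le
  · exact (hq.eval_left x hq.mem_left).ge

end IsStepInterpolant

theorem exists_left_step_poly (A B : Finset ℝ) (hAB : ∀ x ∈ A, ∀ y ∈ B, x < y) :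
    ∃ q : ℝ[X], q.natDegree ≤ 2 * #(A ∪ B) - 2 ∧ (∀ x ∈ A, q.eval x = 1) ∧
      (∀ y ∈ B, q.eval y = 0) ∧ (∀ x, 0 ≤ q.eval x) ∧ ∀ a ∈ A, ∀ x ≤ a, 1 ≤ q.eval x := by
  rcases A.eq_empty_or_nonempty with rfl | hA
  · exact ⟨0, by simp, by simp, by simp, by simp, by simp⟩
  rcases B.eq_empty_or_nonempty with rfl | hB
  · exact ⟨1, by simp, by simp, by simp, by simp, by simp⟩
  obtain ⟨q, hq⟩ := exists_isStepInterpolant (A.max'_mem hA) (A.le_max' · ·) (B.max'_mem hB)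
    fun y hy => ⟨hAB _ (A.max'_mem hA) y hy, B.le_max' y hy⟩
  exact ⟨q, hq.card_union ▸ hq.natDegree_le, hq.eval_left, hq.eval_right, hq.eval_nonneg,
    fun a ha x hx => hq.one_le_eval (hx.trans (A.le_max' a ha))⟩

theorem exists_right_step_poly (A B : Finset ℝ) (hAB : ∀ x ∈ A, ∀ y ∈ B, y < x) :
    ∃ q : ℝ[X], q.natDegree ≤ 2 * #(A ∪ B) - 2 ∧ (∀ x ∈ A, q.eval x = 1) ∧
      (∀ y ∈ B, q.eval y = 0) ∧ (∀ x, 0 ≤ q.eval x) ∧ ∀ a ∈ A, ∀ x, a ≤ x → 1 ≤ q.eval x := by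
  let e := (Equiv.neg ℝ).toEmbedding
  obtain ⟨q, hdeg, h₁, h₀, hpos, hge⟩ := exists_left_step_poly (A.map e) (B.map e) (by
    intro x hx y hy
    simp only [e, Finset.mem_map_equiv] at hx hy
    simpa using hAB _ hx _ hy)
  refine ⟨q.comp (-X), ?_, fun x hx => ?_, fun y hy => ?_, fun x => ?_, fun a ha x hx => ?_⟩
  · simpa [natDegree_comp, ← Finset.map_union] using hdeg
  · simpa using h₁ (-x) (by simpa [e] using hx)
  · simpa using h₀ (-y) (by simpa [e] using hy)
  · simpa using hpos (-x)
  · simpa using hge (-a) (by simpa [e] using ha) (-x) (neg_le_neg hx)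

theorem exists_two_sided_step_poly (L B R : Finset ℝ) (hLB : ∀ x ∈ L, ∀ y ∈ B ∪ R, x < y)
    (hBR : ∀ y ∈ B, ∀ x ∈ R, y < x) :
    ∃ q : ℝ[X], q.natDegree ≤ 2 * #(L ∪ B ∪ R) - 2 ∧ (∀ x ∈ L ∪ R, q.eval x = 1) ∧
      (∀ y ∈ B, q.eval y = 0) ∧ (∀ x, 0 ≤ q.eval x) ∧ (∀ a ∈ L, ∀ x ≤ a, 1 ≤ q.eval x) ∧
      ∀ a ∈ R, ∀ x, a ≤ x → 1 ≤ q.eval x := by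
  obtain ⟨qL, hdegL, h₁L, h₀L, hposL, hgeL⟩ := exists_left_step_poly L (B ∪ R) hLB
  obtain ⟨qR, hdegR, h₁R, h₀R, hposR, hgeR⟩ := exists_right_step_poly R (B ∪ L) fun x hx y hy => by
    rcases Finset.mem_union.1 hy with hy | hy
    · exact hBR y hy x hx
    · exact hLB y hy x (Finset.mem_union_right B hx)
  have hcardL : L ∪ (B ∪ R) = L ∪ B ∪ R := (Finset.union_assoc ..).symm
  have hcardR : R ∪ (B ∪ L) = L ∪ B ∪ R := by ext; simp only [Finset.mem_union]; tauto
  refine ⟨qL + qR, ?_, fun x hx => ?_, fun y hy => ?_, fun x => ?_, fun a ha x hx => ?_,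
    fun a ha x hx => ?_⟩
  · rw [hcardL] at hdegL
    rw [hcardR] at hdegR
    exact (natDegree_add_le _ _).trans (max_le hdegL hdegR)
  · rcases Finset.mem_union.1 hx with hx | hx
    · simp [h₁L x hx, h₀R x (Finset.mem_union_right B hx)]
    · simp [h₀L x (Finset.mem_union_right B hx), h₁R x hx]
  · simp [h₀L y (Finset.mem_union_left R hy), h₀R y (Finset.mem_union_left L hy)]
  · simpa using add_nonneg (hposL x) (hposR x)
  · simpa using add_le_add (hgeL a ha x hx) (hposR x)
  · simpa using add_le_add (hposL x) (hgeR a ha x hx)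

theorem exists_interval_step_poly (L A R : Finset ℝ) (hA : A.Nonempty)
    (hL : ∀ y ∈ L, ∀ x ∈ A ∪ R, y < x) (hR : ∀ x ∈ A, ∀ y ∈ R, x < y) :
    ∃ q : ℝ[X], q.natDegree ≤ 2 * #(L ∪ A ∪ R) - 2 ∧ (∀ x ∈ A, q.eval x = 1) ∧
      (∀ y ∈ L ∪ R, q.eval y = 0) ∧ (∀ x, 0 ≤ q.eval x) ∧
      ∀ a ∈ A, ∀ a' ∈ A, ∀ x ∈ Icc a a', 1 ≤ q.eval x := by
  obtain ⟨qL, hdegL, h₁L, h₀L, hposL, hgeL⟩ := exists_left_step_poly (A ∪ L) R fun x hx y hy => by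
    rcases Finset.mem_union.1 hx with hx | hx
    · exact hR x hx y hy
    · exact hL x hx y (Finset.mem_union_right A hy)
  obtain ⟨qR, hdegR, h₁R, h₀R, hposR, hgeR⟩ := exists_right_step_poly (A ∪ R) L
    fun x hx y hy => hL y hy x hx
  have hcardL : A ∪ L ∪ R = L ∪ A ∪ R := by rw [Finset.union_comm A L]
  have hcardR : A ∪ R ∪ L = L ∪ A ∪ R := by ext; simp only [Finset.mem_union]; tauto
  obtain ⟨a₀, ha₀⟩ := hA
  refine ⟨qL + qR - 1, ?_, fun x hx => ?_, fun y hy => ?_, fun x => ?_, fun a ha a' ha' x hx => ?_⟩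
  · rw [hcardL] at hdegL
    rw [hcardR] at hdegR
    refine (natDegree_sub_le _ _).trans (max_le ((natDegree_add_le _ _).trans
      (max_le hdegL hdegR)) (by simp))
  · simp [h₁L x (Finset.mem_union_left L hx), h₁R x (Finset.mem_union_left R hx)]
  · rcases Finset.mem_union.1 hy with hy | hy
    · simp [h₁L y (Finset.mem_union_right A hy), h₀R y hy]
    · simp [h₀L y hy, h₁R y (Finset.mem_union_right A hy)]
  · simp only [eval_sub, eval_add, eval_one, sub_nonneg]
    rcases le_total x a₀ with hx | hx
    · linarith [hgeL a₀ (Finset.mem_union_left L ha₀) x hx, hposR x]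
    · linarith [hgeR a₀ (Finset.mem_union_left R ha₀) x hx, hposL x]
  · simp only [eval_sub, eval_add, eval_one]
    linarith [hgeL a' (Finset.mem_union_left L ha') x hx.2,
      hgeR a (Finset.mem_union_left R ha) x hx.1]

theorem strictAntiOn_inv_sub_Iio (s : ℝ) : StrictAntiOn (fun x => (x - s)⁻¹) (Iio s) :=
  fun _ hx _ hy hxy => (inv_lt_inv_of_neg (sub_neg.2 hy) (sub_neg.2 hx)).2 (by linarith)

theorem strictAntiOn_inv_sub_Ioi (s : ℝ) : StrictAntiOn (fun x => (x - s)⁻¹) (Ioi s) :=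
  fun _ hx _ _ hxy => inv_strictAnti₀ (sub_pos.2 hx) (by linarith)

theorem strictAntiOn_inv_sub_Icc {s α β : ℝ} (hs : s ∉ Icc α β) :
    StrictAntiOn (fun x => (x - s)⁻¹) (Icc α β) := by
  rcases lt_or_ge s α with h | h
  · exact (strictAntiOn_inv_sub_Ioi s).mono fun x hx => h.trans_le hx.1
  · exact (strictAntiOn_inv_sub_Iio s).mono fun x hx =>
      hx.2.trans_lt (lt_of_not_ge fun hβ => hs ⟨h, hβ⟩)

structure IsBlockCertificate (Θ : Finset ℝ) (s α β : ℝ) (q : ℝ[X]) : Prop where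
  natDegree_le : q.natDegree ≤ 2 * #Θ - 2
  eval_nonneg : ∀ t, 0 ≤ q.eval t
  one_le_eval : ∀ x ∈ Icc α β, x ≠ s → 1 ≤ q.eval (x - s)⁻¹
  eval_of_mem : ∀ x ∈ Θ, x ∈ Icc α β → x ≠ s → q.eval (x - s)⁻¹ = 1
  eval_of_notMem : ∀ x ∈ Θ, x ∉ Icc α β → x ≠ s → q.eval (x - s)⁻¹ = 0

theorem inv_sub_lt_inv_sub_of_lt_of_lt {s x y : ℝ} (hx : x < s) (hy : s < y) :
    (x - s)⁻¹ < (y - s)⁻¹ :=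
  (inv_lt_zero.2 (sub_neg.2 hx)).trans (inv_pos.2 (sub_pos.2 hy))

theorem inv_sub_lt_inv_sub_of_mem_Ico_of_notMem {s α β x y : ℝ} (hs : s ∈ Icc α β)
    (hx : x ∈ Ico α s) (hy : y ∉ Icc α β) : (x - s)⁻¹ < (y - s)⁻¹ := by
  rcases lt_or_gt_of_ne (fun h : y = s => hy (h ▸ hs)) with hys | hys
  · have hyα : y < α := lt_of_not_ge fun h => hy ⟨h, hys.le.trans hs.2⟩
    exact strictAntiOn_inv_sub_Iio s hys hx.2 (hyα.trans_le hx.1)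
  · exact inv_sub_lt_inv_sub_of_lt_of_lt hx.2 hys

theorem inv_sub_lt_inv_sub_of_notMem_of_mem_Ioc {s α β x y : ℝ} (hs : s ∈ Icc α β)
    (hy : y ∉ Icc α β) (hx : x ∈ Ioc s β) : (y - s)⁻¹ < (x - s)⁻¹ := by
  rcases lt_or_gt_of_ne (fun h : y = s => hy (h ▸ hs)) with hys | hys
  · exact inv_sub_lt_inv_sub_of_lt_of_lt hys hx.1
  · have hβy : β < y := lt_of_not_ge fun h => hy ⟨hs.1.trans hys.le, h⟩
    exact strictAntiOn_inv_sub_Ioi s hx.1 hys (hx.2.trans_lt hβy)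

theorem exists_isBlockCertificate_of_mem {Θ : Finset ℝ} {s α β : ℝ} (hα : α ∈ Θ) (hβ : β ∈ Θ)
    (hs : s ∈ Icc α β) : ∃ q, IsBlockCertificate Θ s α β q := by
  set g : ℝ → ℝ := fun x => (x - s)⁻¹
  set L := (Θ.filter fun x => x ∈ Icc α β ∧ x < s).image g
  set R := (Θ.filter fun x => x ∈ Icc α β ∧ s < x).image g
  set B := (Θ.filter fun x => x ∉ Icc α β).image g
  have hLB : ∀ x ∈ L, ∀ y ∈ B ∪ R, x < y := by
    simp only [L, B, R, Finset.mem_union, Finset.mem_image, Finset.mem_filter]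
    rintro _ ⟨x, ⟨-, hxI, hxs⟩, rfl⟩ _ (⟨y, ⟨-, hyI⟩, rfl⟩ | ⟨y, ⟨-, -, hys⟩, rfl⟩)
    exacts [inv_sub_lt_inv_sub_of_mem_Ico_of_notMem hs ⟨hxI.1, hxs⟩ hyI,
      inv_sub_lt_inv_sub_of_lt_of_lt hxs hys]
  have hBR : ∀ y ∈ B, ∀ x ∈ R, y < x := by
    simp only [B, R, Finset.mem_image, Finset.mem_filter]
    rintro _ ⟨y, ⟨-, hyI⟩, rfl⟩ _ ⟨x, ⟨-, hxI, hxs⟩, rfl⟩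
    exact inv_sub_lt_inv_sub_of_notMem_of_mem_Ioc hs hyI ⟨hxs, hxI.2⟩
  obtain ⟨q, hdeg, h₁, h₀, hq, hgeL, hgeR⟩ := exists_two_sided_step_poly L B R hLB hBR
  have hsub : L ∪ B ∪ R ⊆ Θ.image g := by
    simp only [L, B, R, ← Finset.image_union]
    refine Finset.image_subset_image fun x => ?_
    simp only [Finset.mem_union, Finset.mem_filter]
    tauto
  refine ⟨q, hdeg.trans (by
    have := (Finset.card_le_card hsub).trans Finset.card_image_le; omega), hq, fun x hx hxs => ?_,
    fun x hxΘ hx hxs => h₁ _ ?_, fun x hxΘ hx _ => h₀ _ (Finset.mem_image_of_mem g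
      (Finset.mem_filter.2 ⟨hxΘ, hx⟩))⟩
  · rcases lt_or_gt_of_ne hxs with hxs | hxs
    · exact hgeL (g α) (Finset.mem_image_of_mem g (Finset.mem_filter.2
        ⟨hα, ⟨le_rfl, hs.1.trans hs.2⟩, hx.1.trans_lt hxs⟩)) _
        ((strictAntiOn_inv_sub_Iio s).antitoneOn (hx.1.trans_lt hxs) hxs hx.1)
    · exact hgeR (g β) (Finset.mem_image_of_mem g (Finset.mem_filter.2
        ⟨hβ, ⟨hs.1.trans hs.2, le_rfl⟩, hxs.trans_le hx.2⟩)) _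
        ((strictAntiOn_inv_sub_Ioi s).antitoneOn hxs (hxs.trans_le hx.2) hx.2)
  · rcases lt_or_gt_of_ne hxs with hxs | hxs
    · exact Finset.mem_union_left R
        (Finset.mem_image_of_mem g (Finset.mem_filter.2 ⟨hxΘ, hx, hxs⟩))
    · exact Finset.mem_union_right L
        (Finset.mem_image_of_mem g (Finset.mem_filter.2 ⟨hxΘ, hx, hxs⟩))

theorem inv_sub_lt_or_lt_inv_sub {s α β x : ℝ} (hαβ : α ≤ β) (hs : s ∉ Icc α β)
    (hx : x ∉ Icc α β) (hxs : x ≠ s) : (x - s)⁻¹ < (β - s)⁻¹ ∨ (α - s)⁻¹ < (x - s)⁻¹ := by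
  rw [mem_Icc, not_and_or, not_le, not_le] at hx
  rcases lt_or_ge s α with hsα | hαs
  · rcases lt_or_gt_of_ne hxs with hxs | hxs
    · exact Or.inl (inv_sub_lt_inv_sub_of_lt_of_lt hxs (hsα.trans_le hαβ))
    · rcases hx with hx | hx
      · exact Or.inr (strictAntiOn_inv_sub_Ioi s hxs hsα hx)
      · exact Or.inl (strictAntiOn_inv_sub_Ioi s (hsα.trans_le hαβ) hxs hx)
  · have hβs : β < s := lt_of_not_ge fun h => hs ⟨hαs, h⟩
    rcases lt_or_gt_of_ne hxs with hxs | hxs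
    · rcases hx with hx | hx
      · exact Or.inr (strictAntiOn_inv_sub_Iio s hxs (hαβ.trans_lt hβs) hx)
      · exact Or.inl (strictAntiOn_inv_sub_Iio s hβs hxs hx)
    · exact Or.inr (inv_sub_lt_inv_sub_of_lt_of_lt (hαβ.trans_lt hβs) hxs)

theorem exists_isBlockCertificate_of_notMem {Θ : Finset ℝ} {s α β : ℝ} (hα : α ∈ Θ)
    (hβ : β ∈ Θ) (hαβ : α ≤ β) (hs : s ∉ Icc α β) : ∃ q, IsBlockCertificate Θ s α β q := by
  set g : ℝ → ℝ := fun x => (x - s)⁻¹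
  set A := (Θ.filter fun x => x ∈ Icc α β).image g
  set L := (Θ.filter fun x => x ≠ s ∧ g x < g β).image g
  set R := (Θ.filter fun x => x ≠ s ∧ g α < g x).image g
  have hg : ∀ x ∈ Icc α β, g β ≤ g x ∧ g x ≤ g α := fun x hx =>
    ⟨(strictAntiOn_inv_sub_Icc hs).antitoneOn hx (right_mem_Icc.2 hαβ) hx.2,
      (strictAntiOn_inv_sub_Icc hs).antitoneOn (left_mem_Icc.2 hαβ) hx hx.1⟩
  have hA : ∀ t ∈ A, g β ≤ t ∧ t ≤ g α := by
    simp only [A, Finset.mem_image, Finset.mem_filter]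
    rintro _ ⟨x, ⟨-, hx⟩, rfl⟩
    exact hg x hx
  have hL : ∀ t ∈ L, t < g β := by
    simp only [L, Finset.mem_image, Finset.mem_filter]
    rintro _ ⟨x, ⟨-, -, hx⟩, rfl⟩
    exact hx
  have hR : ∀ t ∈ R, g α < t := by
    simp only [R, Finset.mem_image, Finset.mem_filter]
    rintro _ ⟨x, ⟨-, -, hx⟩, rfl⟩
    exact hx
  have hgαβ := hg α (left_mem_Icc.2 hαβ)
  obtain ⟨q, hdeg, h₁, h₀, hq, hge⟩ := exists_interval_step_poly L A R
    ⟨g α, Finset.mem_image_of_mem g (Finset.mem_filter.2 ⟨hα, left_mem_Icc.2 hαβ⟩)⟩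
    (fun y hy x hx => by
      rcases Finset.mem_union.1 hx with hx | hx
      · exact (hL y hy).trans_le (hA x hx).1
      · exact ((hL y hy).trans_le hgαβ.1).trans_le (hgαβ.2.trans (hR x hx).le))
    fun x hx y hy => (hA x hx).2.trans_lt (hR y hy)
  have hsub : L ∪ A ∪ R ⊆ Θ.image g := by
    simp only [L, A, R, ← Finset.image_union]
    refine Finset.image_subset_image fun x => ?_
    simp only [Finset.mem_union, Finset.mem_filter]
    tauto
  have hgA : ∀ x ∈ Θ, x ∈ Icc α β → g x ∈ A := fun x hxΘ hx =>
    Finset.mem_image_of_mem g (Finset.mem_filter.2 ⟨hxΘ, hx⟩)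
  refine ⟨q, hdeg.trans (by
    have := (Finset.card_le_card hsub).trans Finset.card_image_le; omega), hq, fun x hx _ => ?_,
    fun x hxΘ hx _ => h₁ _ (hgA x hxΘ hx), fun x hxΘ hx hxs => h₀ _ ?_⟩
  · exact hge _ (hgA β hβ (right_mem_Icc.2 hαβ)) _ (hgA α hα (left_mem_Icc.2 hαβ)) _ (hg x hx)
  · rcases inv_sub_lt_or_lt_inv_sub hαβ hs hx hxs with h | h
    · exact Finset.mem_union_left R
        (Finset.mem_image_of_mem g (Finset.mem_filter.2 ⟨hxΘ, hxs, h⟩))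
    · exact Finset.mem_union_right L
        (Finset.mem_image_of_mem g (Finset.mem_filter.2 ⟨hxΘ, hxs, h⟩))

theorem exists_isBlockCertificate {Θ : Finset ℝ} (s : ℝ) {α β : ℝ} (hα : α ∈ Θ) (hβ : β ∈ Θ)
    (hαβ : α ≤ β) : ∃ q, IsBlockCertificate Θ s α β q := by
  by_cases hs : s ∈ Icc α β
  · exact exists_isBlockCertificate_of_mem hα hβ hs
  · exact exists_isBlockCertificate_of_notMem hα hβ hαβ hs

theorem sum_le_sum_of_rational_quadrature {ι κ : Type*} [Fintype ι] [Fintype κ] {lam : ι → ℝ}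
    {θ : κ → ℝ} {μ : ι → ℝ} {ν : κ → ℝ} (hμ : ∀ j, 0 ≤ μ j) (hν : ∀ i, 0 ≤ ν i) {s : ℝ}
    (hs : ∀ j, lam j ≠ s) {N : ℕ} (hN : 0 < N) (hcard : 2 * Fintype.card κ - 2 ≤ N)
    (hquad : ∀ p : ℝ[X], p.natDegree ≤ N →
      ∑ j, μ j * (p.eval (lam j) / (lam j - s) ^ N) = ∑ i, ν i * (p.eval (θ i) / (θ i - s) ^ N))
    {α β : ℝ} (hα : α ∈ range θ) (hβ : β ∈ range θ) (hαβ : α ≤ β) :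
    ∑ j ∈ Finset.univ.filter (fun j => α ≤ lam j ∧ lam j ≤ β), μ j ≤
      ∑ i ∈ Finset.univ.filter (fun i => α ≤ θ i ∧ θ i ≤ β), ν i := by
  classical
  have hmem : ∀ {x}, x ∈ range θ → x ∈ Finset.univ.image θ := by simp
  obtain ⟨q, hq⟩ := exists_isBlockCertificate s (hmem hα) (hmem hβ) hαβ
  have hqN : q.natDegree ≤ N := hq.natDegree_le.trans <| le_trans (by
    gcongr; exact Finset.card_image_le.trans (Finset.card_univ (α := κ)).le) hcard
  set p := (reflect N q).comp (X - C s)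
  have hp : ∀ x ≠ s, p.eval x / (x - s) ^ N = q.eval (x - s)⁻¹ :=
    fun x hx => eval_reflect_comp_div_pow hqN hx
  calc ∑ j ∈ Finset.univ.filter (fun j => α ≤ lam j ∧ lam j ≤ β), μ j
      ≤ ∑ j, μ j * (p.eval (lam j) / (lam j - s) ^ N) := by
        rw [Finset.sum_filter]
        refine Finset.sum_le_sum fun j _ => ?_
        rw [hp _ (hs j)]
        split_ifs with h
        · exact le_mul_of_one_le_right (hμ j) (hq.one_le_eval _ h (hs j))
        · exact mul_nonneg (hμ j) (hq.eval_nonneg _)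
    _ = ∑ i, ν i * (p.eval (θ i) / (θ i - s) ^ N) := hquad p (natDegree_reflect_comp_le hqN s)
    _ ≤ ∑ i ∈ Finset.univ.filter (fun i => α ≤ θ i ∧ θ i ≤ β), ν i := by
        rw [Finset.sum_filter]
        refine Finset.sum_le_sum fun i _ => ?_
        by_cases his : θ i = s
        · -- the junk value `p.eval s / 0 = 0`
          rw [his, sub_self, zero_pow hN.ne', div_zero, mul_zero]
          split_ifs
          exacts [hν i, le_rfl]
        rw [hp _ his]
        split_ifs with h
        · rw [hq.eval_of_mem _ (hmem ⟨i, rfl⟩) h his, mul_one]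
        · rw [hq.eval_of_notMem _ (hmem ⟨i, rfl⟩) h his, mul_zero]

theorem stmt_17_general {n m : ℕ} (hm : 0 < m)
    (lam : Fin n → ℝ) (w : Fin n → ℂ)
    (θ : Fin m → ℝ) (hθ : StrictMono θ) (c : Fin m → ℂ)
    (s : ℝ) (hslam : ∀ j, lam j ≠ s)
    (hquad : ∀ p : Polynomial ℝ, p.natDegree ≤ 2 * m - 2 →
      ∑ j, ‖w j‖ ^ 2 * (p.eval (lam j) / (lam j - s) ^ (2 * m - 2))
        = ∑ j, ‖c j‖ ^ 2 * (p.eval (θ j) / (θ j - s) ^ (2 * m - 2)))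
    (hmass : ∑ j, ‖c j‖ ^ 2 = ∑ j, ‖w j‖ ^ 2) :
    ∀ (k : Fin m) (hk : (k : ℕ) + 1 < m),
      (∑ j ∈ Finset.univ.filter fun j => θ ⟨0, hm⟩ ≤ lam j ∧ lam j ≤ θ k, ‖w j‖ ^ 2)
          ≤ (∑ j ∈ Finset.univ.filter fun j => j ≤ k, ‖c j‖ ^ 2) ∧
      (∑ j ∈ Finset.univ.filter fun j => j ≤ k, ‖c j‖ ^ 2)
          ≤ ∑ j ∈ Finset.univ.filter fun j =>
              lam j < θ ⟨(k : ℕ) + 1, hk⟩ ∨ θ ⟨m - 1, Nat.sub_lt hm Nat.one_pos⟩ < lam j,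
              ‖w j‖ ^ 2 := by
  intro k hk
  have hblock := fun {i j : Fin m} (hij : i ≤ j) =>
    sum_le_sum_of_rational_quadrature (μ := fun j => ‖w j‖ ^ 2) (ν := fun j => ‖c j‖ ^ 2)
      (fun _ => by positivity) (fun _ => by positivity) hslam (by omega) (by simp) hquad
      ⟨i, rfl⟩ ⟨j, rfl⟩ (hθ.monotone hij)
  have hlow := hblock (i := ⟨0, hm⟩) (j := k) (Fin.le_def.2 (Nat.zero_le _))
  have hhigh := hblock (i := ⟨k + 1, hk⟩) (j := ⟨m - 1, Nat.sub_lt hm Nat.one_pos⟩)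
    (Fin.le_def.2 (by dsimp only; omega))
  rw [Finset.filter_congr fun i _ => show θ ⟨0, hm⟩ ≤ θ i ∧ θ i ≤ θ k ↔ i ≤ k by
    simp only [hθ.le_iff_le, Fin.le_def]; omega] at hlow
  rw [Finset.filter_congr fun i _ => show θ ⟨k + 1, hk⟩ ≤ θ i ∧
      θ i ≤ θ ⟨m - 1, Nat.sub_lt hm Nat.one_pos⟩ ↔ ¬i ≤ k by
        simp only [hθ.le_iff_le, Fin.le_def]; omega,
    Finset.filter_congr fun j _ => show θ ⟨k + 1, hk⟩ ≤ lam j ∧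
      lam j ≤ θ ⟨m - 1, Nat.sub_lt hm Nat.one_pos⟩ ↔
        ¬(lam j < θ ⟨k + 1, hk⟩ ∨ θ ⟨m - 1, Nat.sub_lt hm Nat.one_pos⟩ < lam j) by
      rw [not_or, not_lt, not_lt]] at hhigh
  have hc := Finset.sum_filter_add_sum_filter_not Finset.univ (· ≤ k) fun j => ‖c j‖ ^ 2
  have hw := Finset.sum_filter_add_sum_filter_not Finset.univ
    (fun j => lam j < θ ⟨k + 1, hk⟩ ∨ θ ⟨m - 1, Nat.sub_lt hm Nat.one_pos⟩ < lam j)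
    fun j => ‖w j‖ ^ 2
  exact ⟨hlow, by linarith⟩

/-- In the setting of the separation theorem for a single real pole
`s ∈ (θ_1, θ_m)` (rational quadrature identity of degree `2m−2` with denominator
`(λ−s)^{2m−2}`, interlacing, equal total mass), the accumulated quadrature weights
satisfy `μ_n([θ_1, θ_k]) ≤ ∑_{j≤k} ‖c j‖² ≤ μ_n((−∞, θ_{k+1}) ∪ (θ_m, ∞))` for
`k = 1,…,m−1`. -/
theorem stmt_17 {n m : ℕ} (hm : 0 < m)
    (lam : Fin n → ℝ) (hlam : StrictMono lam)
    (w : Fin n → ℂ) (hw : ∀ j, w j ≠ 0)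
    (θ : Fin m → ℝ) (hθ : StrictMono θ) (c : Fin m → ℂ)
    (s : ℝ) (hslam : ∀ j, lam j ≠ s)
    (hsθ : θ ⟨0, hm⟩ < s ∧ s < θ ⟨m - 1, Nat.sub_lt hm Nat.one_pos⟩)
    (hinter : ∀ (k : Fin m) (hk : (k : ℕ) + 1 < m),
      ∃ j, θ k < lam j ∧ lam j < θ ⟨(k : ℕ) + 1, hk⟩)
    (hquad : ∀ p : Polynomial ℝ, p.natDegree ≤ 2 * m - 2 →
      ∑ j, ‖w j‖ ^ 2 * (p.eval (lam j) / (lam j - s) ^ (2 * m - 2))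
        = ∑ j, ‖c j‖ ^ 2 * (p.eval (θ j) / (θ j - s) ^ (2 * m - 2)))
    (hmass : ∑ j, ‖c j‖ ^ 2 = ∑ j, ‖w j‖ ^ 2) :
    ∀ (k : Fin m) (hk : (k : ℕ) + 1 < m),
      (∑ j ∈ Finset.univ.filter fun j => θ ⟨0, hm⟩ ≤ lam j ∧ lam j ≤ θ k, ‖w j‖ ^ 2)
          ≤ (∑ j ∈ Finset.univ.filter fun j => j ≤ k, ‖c j‖ ^ 2) ∧
      (∑ j ∈ Finset.univ.filter fun j => j ≤ k, ‖c j‖ ^ 2)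
          ≤ ∑ j ∈ Finset.univ.filter fun j =>
              lam j < θ ⟨(k : ℕ) + 1, hk⟩ ∨ θ ⟨m - 1, Nat.sub_lt hm Nat.one_pos⟩ < lam j,
              ‖w j‖ ^ 2 :=
  stmt_17_general hm lam w θ hθ c s hslam hquad hmass
end

section
/- Let θ_1 < ... < θ_m be real and s ∈ ℂ \ ℝ, with q(λ) = (λ−s)^{m−1}. For each k ∈ {1,...,m−1} there exists a rational function r(λ) = g(λ)/|q(λ)|² with g a real polynomial of degree ≤ 2m−2 such that r(θ_k) = r(θ_{k+1}) = 1, r(θ_j) = 0 for j ∉ {k, k+1}, r(λ) ≥ 1 on [θ_k, θ_{k+1}], and r(λ) ≥ 0 on ℝ \ [θ_k, θ_{k+1}]. -/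
/-! The majorant is `g = h ^ 2` with `h = ℓ * ∏ (X - θ j)` over the nodes `j ∉ {k, k + 1}` and
`ℓ` affine, chosen so that `|h| = ‖x - s‖ ^ (m - 1)` at `θ k` and `θ (k + 1)`. On
`[θ k, θ (k + 1)]` all `m - 1` factors of `|h|` are affine, since the other nodes lie outside the
interval. By Mahler's inequality the geometric mean of affine functions is concave, so it
dominates the convex function `x ↦ ‖x - s‖` between the two points where the two agree. -/

open Finset Polynomial Set

namespace Real

theorem card_mul_le_sum_of_prod_eq_pow {ι : Type*} (s : Finset ι) {z : ι → ℝ} {r : ℝ}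
    (hz : ∀ i ∈ s, 0 ≤ z i) (hr : 0 ≤ r) (h : ∏ i ∈ s, z i = r ^ #s) :
    #s * r ≤ ∑ i ∈ s, z i := by
  rcases s.eq_empty_or_nonempty with rfl | hs
  · simp
  have hn : (0 : ℝ) < #s := by exact_mod_cast hs.card_pos
  have amgm := geom_mean_le_arith_mean_weighted s (fun _ ↦ (#s : ℝ)⁻¹) z
    (fun _ _ ↦ by positivity) (by simp [hn.ne']) hz
  rw [finsetProd_rpow s z hz, h, pow_rpow_inv_natCast hr hs.card_pos.ne', ← mul_sum,
    inv_mul_eq_div, le_div_iff₀ hn] at amgm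
  linarith

/-- Mahler's inequality, with the `#s`-th roots of the products taken out. -/
theorem pow_card_add_le_prod_add {ι : Type*} (s : Finset ι) {x y : ι → ℝ} {c d : ℝ}
    (hx : ∀ i ∈ s, 0 ≤ x i) (hy : ∀ i ∈ s, 0 ≤ y i) (hc : 0 ≤ c) (hd : 0 ≤ d)
    (hxc : ∏ i ∈ s, x i = c ^ #s) (hyd : ∏ i ∈ s, y i = d ^ #s) :
    (c + d) ^ #s ≤ ∏ i ∈ s, (x i + y i) := by
  rcases s.eq_empty_or_nonempty with rfl | hs
  · simp
  have hn : #s ≠ 0 := hs.card_pos.ne'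
  set P := ∏ i ∈ s, (x i + y i)
  rcases (prod_nonneg fun i hi ↦ add_nonneg (hx i hi) (hy i hi)).eq_or_lt with hP | hP
  · obtain ⟨i, hi, hxy⟩ := prod_eq_zero_iff.1 hP.symm
    have hxi : x i = 0 := by linarith [hx i hi, hy i hi]
    have hyi : y i = 0 := by linarith [hx i hi, hy i hi]
    have hc0 : c = 0 := (pow_eq_zero_iff hn).1 (hxc ▸ prod_eq_zero hi hxi)
    have hd0 : d = 0 := (pow_eq_zero_iff hn).1 (hyd ▸ prod_eq_zero hi hyi)
    rw [hc0, hd0, add_zero, zero_pow hn]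
    exact hP.le
  have hxy : ∀ i ∈ s, x i + y i ≠ 0 := prod_ne_zero_iff.1 hP.ne'
  -- `R` is the geometric mean of the `x i + y i`; AM-GM for the ratios `x i / (x i + y i)`
  -- and `y i / (x i + y i)`, which sum to `1`, gives `c / R + d / R ≤ 1`.
  set R := P ^ ((#s : ℝ)⁻¹)
  have hR : 0 < R := rpow_pos_of_pos hP _
  have hRP : R ^ #s = P := rpow_inv_natCast_pow hP.le hn
  have amgm {w : ι → ℝ} {e : ℝ} (hw : ∀ i ∈ s, 0 ≤ w i) (he : 0 ≤ e)
      (hwe : ∏ i ∈ s, w i = e ^ #s) : #s * (e / R) ≤ ∑ i ∈ s, w i / (x i + y i) := by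
    refine card_mul_le_sum_of_prod_eq_pow s (fun i hi ↦ div_nonneg (hw i hi) (by
      linarith [hx i hi, hy i hi])) (by positivity) ?_
    rw [prod_div_distrib, hwe, div_pow, hRP]
  have hsum : ∑ i ∈ s, x i / (x i + y i) + ∑ i ∈ s, y i / (x i + y i) = #s := by
    rw [← sum_add_distrib, sum_congr rfl fun i hi ↦ (add_div _ _ _).symm.trans
      (div_self (hxy i hi)), sum_const, nsmul_one]
  have hcd : c + d ≤ R := by
    have := add_le_add (amgm hx hc hxc) (amgm hy hd hyd)
    rw [hsum, ← mul_add, ← add_div, mul_le_iff_le_one_right (by positivity),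
      div_le_one hR] at this
    exact this
  calc (c + d) ^ #s ≤ R ^ #s := pow_le_pow_left₀ (add_nonneg hc hd) hcd _
    _ = P := hRP

end Real

theorem ConvexOn.pow_card_le_prod_of_affine {ι : Type*} {s : Finset ι} {N : ℝ → ℝ} {L : ι → ℝ → ℝ}
    {a b : ℝ} (hN : ConvexOn ℝ (Icc a b) N) (hN0 : ∀ x ∈ Icc a b, 0 ≤ N x)
    (hL : ∀ i ∈ s, ∀ μ ν : ℝ, 0 ≤ μ → 0 ≤ ν → μ + ν = 1 →
      L i (μ * a + ν * b) = μ * L i a + ν * L i b)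
    (hLa : ∀ i ∈ s, 0 ≤ L i a) (hLb : ∀ i ∈ s, 0 ≤ L i b)
    (ha : ∏ i ∈ s, L i a = N a ^ #s) (hb : ∏ i ∈ s, L i b = N b ^ #s) :
    ∀ x ∈ Icc a b, N x ^ #s ≤ ∏ i ∈ s, L i x := by
  intro x hx
  have hab : a ≤ b := hx.1.trans hx.2
  have ha' : a ∈ Icc a b := left_mem_Icc.2 hab
  have hb' : b ∈ Icc a b := right_mem_Icc.2 hab
  obtain ⟨μ, ν, hμ, hν, hμν, rfl⟩ := Icc_subset_segment hx
  simp only [smul_eq_mul] at hx ⊢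
  calc N (μ * a + ν * b) ^ #s ≤ (μ * N a + ν * N b) ^ #s :=
        pow_le_pow_left₀ (hN0 _ hx) (hN.2 ha' hb' hμ hν hμν) _
    _ ≤ ∏ i ∈ s, (μ * L i a + ν * L i b) :=
        Real.pow_card_add_le_prod_add s (fun i hi ↦ mul_nonneg hμ (hLa i hi))
          (fun i hi ↦ mul_nonneg hν (hLb i hi)) (mul_nonneg hμ (hN0 a ha'))
          (mul_nonneg hν (hN0 b hb')) (by rw [prod_mul_distrib, prod_const, ha, mul_pow])
          (by rw [prod_mul_distrib, prod_const, hb, mul_pow])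
    _ = ∏ i ∈ s, L i (μ * a + ν * b) := prod_congr rfl fun i hi ↦ (hL i hi μ ν hμ hν hμν).symm

theorem abs_mul_add_mul_sub_of_notMem_Ioo {a b z μ ν : ℝ} (hab : a ≤ b) (hz : z ∉ Ioo a b)
    (hμ : 0 ≤ μ) (hν : 0 ≤ ν) (hμν : μ + ν = 1) :
    |μ * a + ν * b - z| = μ * |a - z| + ν * |b - z| := by
  have hsplit : μ * a + ν * b - z = μ * (a - z) + ν * (b - z) := by
    linear_combination z * hμν
  rw [hsplit]
  rcases le_or_gt z a with hza | hza
  · have hzb : 0 ≤ b - z := by linarith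
    rw [abs_of_nonneg (sub_nonneg.2 hza), abs_of_nonneg hzb,
      abs_of_nonneg (add_nonneg (mul_nonneg hμ (sub_nonneg.2 hza)) (mul_nonneg hν hzb))]
  · have hbz : b - z ≤ 0 := sub_nonpos.2 (not_lt.1 fun h ↦ hz ⟨hza, h⟩)
    have haz : a - z ≤ 0 := by linarith
    rw [abs_of_nonpos haz, abs_of_nonpos hbz,
      abs_of_nonpos (add_nonpos (mul_nonpos_of_nonneg_of_nonpos hμ haz)
        (mul_nonpos_of_nonneg_of_nonpos hν hbz))]
    ring

theorem ConvexOn.exists_poly_majorant {N : ℝ → ℝ} {a b : ℝ} (hab : a ≤ b)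
    (hN : ConvexOn ℝ (Icc a b) N) (hN0 : ∀ x ∈ Icc a b, 0 ≤ N x) (T : Finset ℝ)
    (hT : ∀ z ∈ T, z ∉ Icc a b) :
    ∃ h : ℝ[X], h.natDegree ≤ #T + 1 ∧ |h.eval a| = N a ^ (#T + 1) ∧
      |h.eval b| = N b ^ (#T + 1) ∧ (∀ z ∈ T, h.eval z = 0) ∧
      ∀ x ∈ Icc a b, N x ^ (#T + 1) ≤ |h.eval x| := by
  have ha : a ∈ Icc a b := left_mem_Icc.2 hab
  have hb : b ∈ Icc a b := right_mem_Icc.2 hab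
  set P : ℝ → ℝ := fun y ↦ ∏ z ∈ T, |y - z|
  have hP {y : ℝ} (hy : y ∈ Icc a b) : 0 < P y :=
    prod_pos fun z hz ↦ abs_pos.2 (sub_ne_zero.2 fun h ↦ hT z hz (h ▸ hy))
  set α := N a ^ (#T + 1) / P a
  set β := N b ^ (#T + 1) / P b
  have hα : 0 ≤ α := div_nonneg (pow_nonneg (hN0 a ha) _) (hP ha).le
  have hβ : 0 ≤ β := div_nonneg (pow_nonneg (hN0 b hb) _) (hP hb).le
  set κ := (β - α) / (b - a)
  set ℓ : ℝ[X] := C κ * X + C (α - κ * a)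
  have hℓa : ℓ.eval a = α := by simp [ℓ]
  have hℓb : ℓ.eval b = β := by
    have : κ * (b - a) = β - α :=
      div_mul_cancel_of_imp fun h ↦ by simp [α, β, sub_eq_zero.1 h]
    simp only [ℓ, eval_add, eval_mul, eval_C, eval_X]
    linear_combination this
  have hℓ (μ ν : ℝ) (hμν : μ + ν = 1) :
      ℓ.eval (μ * a + ν * b) = μ * ℓ.eval a + ν * ℓ.eval b := by
    simp only [ℓ, eval_add, eval_mul, eval_C, eval_X]
    linear_combination (κ * a - α) * hμν
  set h : ℝ[X] := ℓ * ∏ z ∈ T, (X - C z)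
  have habs (y : ℝ) : |h.eval y| = |ℓ.eval y| * P y := by
    simp [h, P, eval_prod, abs_prod]
  refine ⟨h, ?_, ?_, ?_, ?_, ?_⟩
  · calc h.natDegree ≤ 1 + #T := natDegree_mul_le.trans
          (add_le_add natDegree_linear_le (natDegree_finsetProd_X_sub_C_eq_card T id).le)
      _ = #T + 1 := add_comm _ _
  · rw [habs, hℓa, abs_of_nonneg hα, div_mul_cancel₀ _ (hP ha).ne']
  · rw [habs, hℓb, abs_of_nonneg hβ, div_mul_cancel₀ _ (hP hb).ne']
  · intro z hz
    simp [h, eval_prod, prod_eq_zero hz]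
  · intro x hx
    -- the `#T + 1` factors of `|h|` on `[a, b]`: `ℓ` and the `|· - z|`
    set L : Option ℝ → ℝ → ℝ := fun o y ↦ o.elim (ℓ.eval y) fun z ↦ |y - z|
    have key := hN.pow_card_le_prod_of_affine (s := insertNone T) (L := L) hN0 ?_ ?_ ?_ ?_ ?_ x hx
    · rw [card_insertNone, prod_insertNone] at key
      calc N x ^ (#T + 1) ≤ ℓ.eval x * P x := key
        _ ≤ |ℓ.eval x| * P x := mul_le_mul_of_nonneg_right (le_abs_self _) (hP hx).le
        _ = |h.eval x| := (habs x).symm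
    · rintro (_ | z) hz μ ν hμ hν hμν
      · exact hℓ μ ν hμν
      · exact abs_mul_add_mul_sub_of_notMem_Ioo hab
          (fun h ↦ hT z (some_mem_insertNone.1 hz) (Ioo_subset_Icc_self h)) hμ hν hμν
    · rintro (_ | z) _
      exacts [show 0 ≤ ℓ.eval a from hℓa ▸ hα, abs_nonneg _]
    · rintro (_ | z) _
      exacts [show 0 ≤ ℓ.eval b from hℓb ▸ hβ, abs_nonneg _]
    · rw [card_insertNone, prod_insertNone]
      exact (congrArg (· * P a) hℓa).trans (div_mul_cancel₀ _ (hP ha).ne')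
    · rw [card_insertNone, prod_insertNone]
      exact (congrArg (· * P b) hℓb).trans (div_mul_cancel₀ _ (hP hb).ne')

theorem Complex.convexOn_norm_ofReal_sub (s : ℂ) : ConvexOn ℝ univ fun x : ℝ ↦ ‖(x : ℂ) - s‖ := by
  refine ⟨convex_univ, fun x _ y _ μ ν hμ hν hμν ↦ ?_⟩
  have hμν' : (μ : ℂ) + ν = 1 := by exact_mod_cast hμν
  calc ‖((μ • x + ν • y : ℝ) : ℂ) - s‖ = ‖(μ : ℂ) * (x - s) + (ν : ℂ) * (y - s)‖ := by
        push_cast [smul_eq_mul]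
        congr 1
        linear_combination s * hμν'
    _ ≤ μ • ‖(x : ℂ) - s‖ + ν • ‖(y : ℂ) - s‖ := by
        refine (norm_add_le _ _).trans_eq ?_
        simp [Complex.norm_real, abs_of_nonneg hμ, abs_of_nonneg hν]

theorem Complex.sq_norm_ofReal_sub (x : ℝ) (s : ℂ) :
    ‖(x : ℂ) - s‖ ^ 2 = (x - s.re) ^ 2 + s.im ^ 2 := by
  rw [Complex.sq_norm, Complex.normSq_apply]
  simp only [sub_re, ofReal_re, sub_im, ofReal_im, zero_sub, mul_neg, neg_mul, neg_neg]
  ring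

section Nodes

variable {m : ℕ} {α : Type*} [LinearOrder α] {θ : Fin m → α} {k : Fin m}

theorem StrictMono.card_image_erase_erase (hθ : StrictMono θ) (hk : (k : ℕ) + 1 < m) :
    #(((univ.erase ⟨k + 1, hk⟩).erase k).image θ) + 1 = m - 1 := by
  rw [card_image_of_injective _ hθ.injective, card_erase_of_mem (by simp [Fin.ext_iff]),
    card_erase_of_mem (mem_univ _), card_univ, Fintype.card_fin]
  omega

theorem StrictMono.notMem_Icc_of_mem_image_erase_erase (hθ : StrictMono θ)
    (hk : (k : ℕ) + 1 < m) :
    ∀ z ∈ ((univ.erase ⟨k + 1, hk⟩).erase k).image θ, z ∉ Icc (θ k) (θ ⟨k + 1, hk⟩) := by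
  intro z hz ⟨h₁, h₂⟩
  obtain ⟨j, hj, rfl⟩ := mem_image.1 hz
  obtain ⟨hjk, hjk₁, -⟩ := by simpa only [mem_erase] using hj
  have h₁ := hθ.le_iff_le.1 h₁
  have h₂ := hθ.le_iff_le.1 h₂
  simp only [Fin.le_def, ne_eq, Fin.ext_iff] at h₁ h₂ hjk hjk₁
  omega

end Nodes

/-- Rational majorant for a complex-conjugate pair of poles: for
nodes `θ_1 < … < θ_m`, `s ∈ ℂ \ ℝ`, `q(λ) = (λ−s)^{m−1}` (so that
`|q(λ)|² = ((λ−Re s)² + (Im s)²)^{m−1}` for real `λ`), and each `k < m`, there is a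
rational function `r(λ) = g(λ)/|q(λ)|²` with `g` a real polynomial of degree
`≤ 2m−2` such that `r(θ_k) = r(θ_{k+1}) = 1`, `r(θ_j) = 0` otherwise, `r ≥ 1` on
`[θ_k, θ_{k+1}]` and `r ≥ 0` on `ℝ \ [θ_k, θ_{k+1}]`. -/
theorem stmt_18 {m : ℕ} (θ : Fin m → ℝ) (hθ : StrictMono θ)
    (s : ℂ) (hs : s.im ≠ 0)
    (k : Fin m) (hk : (k : ℕ) + 1 < m) :
    ∃ g : Polynomial ℝ, g.natDegree ≤ 2 * m - 2 ∧
      (g.eval (θ k) / ((θ k - s.re) ^ 2 + s.im ^ 2) ^ (m - 1) = 1) ∧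
      (g.eval (θ ⟨(k : ℕ) + 1, hk⟩) /
        ((θ ⟨(k : ℕ) + 1, hk⟩ - s.re) ^ 2 + s.im ^ 2) ^ (m - 1) = 1) ∧
      (∀ j : Fin m, j ≠ k → j ≠ ⟨(k : ℕ) + 1, hk⟩ →
        g.eval (θ j) / ((θ j - s.re) ^ 2 + s.im ^ 2) ^ (m - 1) = 0) ∧
      (∀ x : ℝ, θ k ≤ x → x ≤ θ ⟨(k : ℕ) + 1, hk⟩ →
        1 ≤ g.eval x / ((x - s.re) ^ 2 + s.im ^ 2) ^ (m - 1)) ∧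
      (∀ x : ℝ, x < θ k ∨ θ ⟨(k : ℕ) + 1, hk⟩ < x →
        0 ≤ g.eval x / ((x - s.re) ^ 2 + s.im ^ 2) ^ (m - 1)) := by
  set N : ℝ → ℝ := fun x ↦ ‖(x : ℂ) - s‖
  have hN (x : ℝ) : 0 < N x := norm_pos_iff.2 (sub_ne_zero.2 fun h ↦ hs (by simp [← h]))
  have hW (x : ℝ) : ((x - s.re) ^ 2 + s.im ^ 2) ^ (m - 1) = (N x ^ (m - 1)) ^ 2 := by
    rw [← Complex.sq_norm_ofReal_sub, ← pow_mul, ← pow_mul, mul_comm]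
  obtain ⟨h, hdeg, ha, hb, hzero, hmaj⟩ :=
    ConvexOn.exists_poly_majorant (hθ.monotone (show k ≤ ⟨k + 1, hk⟩ from Nat.le_succ k))
      ((Complex.convexOn_norm_ofReal_sub s).subset (subset_univ _) (convex_Icc _ _))
      (fun x _ ↦ (hN x).le) _ (hθ.notMem_Icc_of_mem_image_erase_erase hk)
  rw [hθ.card_image_erase_erase hk] at hdeg ha hb hmaj
  refine ⟨h ^ 2, by rw [natDegree_pow]; omega, ?_, ?_, ?_, ?_, ?_⟩ <;>
    simp only [hW, eval_pow, ← sq_abs (eval _ h)]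
  · rw [ha, div_self (pow_ne_zero _ (pow_ne_zero _ (hN _).ne'))]
  · rw [hb, div_self (pow_ne_zero _ (pow_ne_zero _ (hN _).ne'))]
  · intro j hjk hjk₁
    rw [hzero _ (mem_image_of_mem θ (by simp [hjk, hjk₁])), abs_zero, zero_pow two_ne_zero,
      zero_div]
  · intro x h₁ h₂
    rw [one_le_div (pow_pos (pow_pos (hN x) _) _)]
    exact pow_le_pow_left₀ (by positivity) (hmaj x ⟨h₁, h₂⟩) 2
  · intro x _
    positivity
end

section
/- Let λ_1 < ... < λ_n with positive weights |w_j|², and let θ_1 < ... < θ_m with weights |c_j|² satisfy ∑_j |w_j|² r(λ_j) = ∑_j |c_j|² r(θ_j) for all r = p/|q_{m−1}|² with deg p ≤ 2m−2, where q_{m−1}(λ) = (λ−s)^{m−1} for some s ∈ ℂ \ ℝ. Then μ_n([θ_k, θ_{k+1}]) ≤ |c_k|² + |c_{k+1}|² for k = 1,...,m−1, and μ_n((−∞, θ_1]) + μ_n([θ_m, ∞)) ≤ |c_1|² + |c_m|², where μ_n(R) = ∑_{j: λ_j ∈ R} |w_j|². -/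
/-!
Let `D(x) = ((x - Re s)² + (Im s)²)^(m-1)`. If `P ≥ 0` has degree `≤ 2m-2`, vanishes at all nodes
but `θ_k, θ_l`, equals `D` there, and `P ≥ D` on a set `S`, then exactness of the quadrature on
`P / D` gives `μ_n(S) ≤ ∑ |w_j|² P(λ_j)/D(λ_j) = ∑ |c_j|² P(θ_j)/D(θ_j) = |c_k|² + |c_l|²`.
We take `P = (ℓ ∏_{j ≠ k, l} (x - θ_j))²` with `ℓ` affine and fixed by the two interpolation
conditions: `ℓ > 0` between consecutive nodes, and `ℓ` changes sign between the extreme nodes.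

That `P ≥ D` on `S` reduces to one fact: if `p` is a product of at most `M` real affine factors
without zeros on `[a, b]`, then `p² / ((y - α)² + β²)^M` is at least the smaller of its endpoint
values on `[a, b]`, because its logarithmic derivative is `Φ / ((y - α)² + β²)` with `Φ`
antitone. Between consecutive nodes this applies directly; outside the extreme nodes it applies
after the inversion `y = (x - v)⁻¹` at the root `v` of `ℓ`, which maps `(-∞, θ_1] ∪ [θ_m, ∞)`
onto an interval and preserves the shape of `P / D`.
-/

open Polynomial Set Finset

theorem min_le_of_hasDerivAt_div_of_antitoneOn {f Φ w : ℝ → ℝ} {a b x : ℝ}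
    (hf : ∀ y ∈ Icc a b, HasDerivAt f (Φ y / w y) y) (hw : ∀ y ∈ Icc a b, 0 < w y)
    (hΦ : AntitoneOn Φ (Icc a b)) (hx : x ∈ Icc a b) : min (f a) (f b) ≤ f x := by
  by_contra! hlt
  have hax : a < x := hx.1.lt_of_ne (by rintro rfl; exact (min_le_left _ _).not_gt hlt)
  have hxb : x < b := hx.2.lt_of_ne (by rintro rfl; exact (min_le_right _ _).not_gt hlt)
  have hcont : ContinuousOn f (Icc a b) :=
    fun y hy => (hf y hy).continuousAt.continuousWithinAt
  obtain ⟨ξ₁, hξ₁, hslope₁⟩ := exists_hasDerivAt_eq_slope f (fun y => Φ y / w y) hax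
    (hcont.mono (Icc_subset_Icc_right hx.2))
    fun y hy => hf y ⟨hy.1.le, hy.2.le.trans hx.2⟩
  obtain ⟨ξ₂, hξ₂, hslope₂⟩ := exists_hasDerivAt_eq_slope f (fun y => Φ y / w y) hxb
    (hcont.mono (Icc_subset_Icc_left hx.1))
    fun y hy => hf y ⟨hx.1.trans hy.1.le, hy.2.le⟩
  have hξ₁mem : ξ₁ ∈ Icc a b := ⟨hξ₁.1.le, hξ₁.2.le.trans hx.2⟩
  have hξ₂mem : ξ₂ ∈ Icc a b := ⟨hx.1.trans hξ₂.1.le, hξ₂.2.le⟩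
  have hΦ₁ : Φ ξ₁ < 0 := by
    have : Φ ξ₁ / w ξ₁ < 0 := by
      rw [hslope₁]
      exact div_neg_of_neg_of_pos (by linarith [min_le_left (f a) (f b)]) (by linarith)
    exact neg_of_div_neg_left this (hw ξ₁ hξ₁mem).le
  have hΦ₂ : 0 < Φ ξ₂ := by
    have : 0 < Φ ξ₂ / w ξ₂ := by
      rw [hslope₂]; exact div_pos (by linarith [min_le_right (f a) (f b)]) (by linarith)
    exact (div_pos_iff_of_pos_right (hw ξ₂ hξ₂mem)).1 this
  linarith [hΦ hξ₁mem hξ₂mem (hξ₁.2.trans hξ₂.1).le]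

theorem ContinuousOn.mul_pos_of_forall_ne_zero {f : ℝ → ℝ} {a b y z : ℝ}
    (hf : ContinuousOn f (Icc a b)) (hf0 : ∀ t ∈ Icc a b, f t ≠ 0) (hy : y ∈ Icc a b)
    (hz : z ∈ Icc a b) : 0 < f y * f z := by
  by_contra! hle
  have hsub : uIcc y z ⊆ Icc a b := uIcc_subset_Icc hy hz
  have h0 : (0 : ℝ) ∈ uIcc (f y) (f z) := by
    rcases mul_nonpos_iff.1 hle with h | h
    · exact mem_uIcc.2 (Or.inr ⟨h.2, h.1⟩)
    · exact mem_uIcc.2 (Or.inl h)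
  obtain ⟨t, ht, hft⟩ := intermediate_value_uIcc (hf.mono hsub) h0
  exact hf0 t (hsub ht) hft

-- The function is `w · (log (L² / w))'` for `L y = q * y + r` and `w y = (y - α) ^ 2 + β ^ 2`.
theorem antitoneOn_mul_logDeriv_sq_affine_div (q r α β : ℝ) {a b : ℝ}
    (hL : ∀ y ∈ Icc a b, q * y + r ≠ 0) :
    AntitoneOn (fun y => 2 * q * ((y - α) ^ 2 + β ^ 2) / (q * y + r) - 2 * (y - α))
      (Icc a b) := by
  intro y hy z hz hyz
  have hpos := ContinuousOn.mul_pos_of_forall_ne_zero (by fun_prop) hL hy hz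
  have hy0 := hL y hy
  have hz0 := hL z hz
  have hdiff : (2 * q * ((y - α) ^ 2 + β ^ 2) / (q * y + r) - 2 * (y - α))
      - (2 * q * ((z - α) ^ 2 + β ^ 2) / (q * z + r) - 2 * (z - α))
      = 2 * ((q * α + r) ^ 2 + q ^ 2 * β ^ 2) * (z - y) / ((q * y + r) * (q * z + r)) := by
    field_simp
    ring
  have : 0 ≤ 2 * ((q * α + r) ^ 2 + q ^ 2 * β ^ 2) * (z - y) / ((q * y + r) * (q * z + r)) :=
    div_nonneg (mul_nonneg (by positivity) (by linarith)) hpos.le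
  dsimp only
  linarith

theorem min_le_sq_prod_affine_div_pow {ι : Type*} (T : Finset ι) (q r : ι → ℝ) {α β : ℝ}
    (hβ : β ≠ 0) {M : ℕ} (hT : #T ≤ M) {a b y : ℝ}
    (hL : ∀ i ∈ T, ∀ z ∈ Icc a b, q i * z + r i ≠ 0) (hy : y ∈ Icc a b) :
    min ((∏ i ∈ T, (q i * a + r i)) ^ 2 / ((a - α) ^ 2 + β ^ 2) ^ M)
        ((∏ i ∈ T, (q i * b + r i)) ^ 2 / ((b - α) ^ 2 + β ^ 2) ^ M)
      ≤ (∏ i ∈ T, (q i * y + r i)) ^ 2 / ((y - α) ^ 2 + β ^ 2) ^ M := by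
  set w : ℝ → ℝ := fun z => (z - α) ^ 2 + β ^ 2
  have hw : ∀ z, 0 < w z := fun z => by positivity
  set ψ : ℝ → ℝ := fun z => 2 * ∑ i ∈ T, Real.log (q i * z + r i) - M * Real.log (w z)
  set Φ : ℝ → ℝ := fun z => ∑ i ∈ T, (2 * q i * w z / (q i * z + r i) - 2 * (z - α))
    - 2 * (M - #T) * (z - α)
  have hexp : ∀ z ∈ Icc a b, (∏ i ∈ T, (q i * z + r i)) ^ 2 / w z ^ M = Real.exp (ψ z) := by
    intro z hz
    have hprod : ∏ i ∈ T, (q i * z + r i) ≠ 0 := prod_ne_zero_iff.2 fun i hi => hL i hi z hz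
    rw [← Real.exp_log (by positivity : 0 < (∏ i ∈ T, (q i * z + r i)) ^ 2 / w z ^ M),
      Real.log_div (by positivity) (by positivity), Real.log_pow, Real.log_pow,
      Real.log_prod fun i hi => hL i hi z hz]
    simp only [ψ, Nat.cast_ofNat]
  have hderiv : ∀ z ∈ Icc a b, HasDerivAt ψ (Φ z / w z) z := by
    intro z hz
    have hlog : ∀ i ∈ T,
        HasDerivAt (fun z => Real.log (q i * z + r i)) (q i / (q i * z + r i)) z := fun i hi => by
      simpa using (((hasDerivAt_id z).const_mul (q i)).add_const (r i)).log (hL i hi z hz)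
    have hw' : HasDerivAt w (2 * (z - α)) z :=
      ((((hasDerivAt_id z).sub_const α).pow 2).add_const (β ^ 2)).congr_deriv (by simp)
    refine (((HasDerivAt.fun_sum hlog).const_mul 2).sub
      ((hw'.log (hw z).ne').const_mul (M : ℝ))).congr_deriv ?_
    have hsum : ∑ i ∈ T, 2 * q i * w z / (q i * z + r i)
        = w z * (2 * ∑ i ∈ T, q i / (q i * z + r i)) := by
      rw [mul_sum, mul_sum]
      exact sum_congr rfl fun i _ => by ring
    have := (hw z).ne'
    simp only [Φ, sum_sub_distrib, sum_const, nsmul_eq_mul, hsum]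
    generalize ∑ i ∈ T, q i / (q i * z + r i) = S
    field_simp
    ring
  have hanti : AntitoneOn Φ (Icc a b) := by
    intro y hy z hz hyz
    have hT' : (#T : ℝ) ≤ M := by exact_mod_cast hT
    have := Finset.sum_le_sum fun i hi =>
      antitoneOn_mul_logDeriv_sq_affine_div (q i) (r i) α β (hL i hi) hy hz hyz
    simp only [Φ]
    nlinarith
  have hab : a ≤ b := hy.1.trans hy.2
  calc _ = Real.exp (min (ψ a) (ψ b)) := by
        rw [hexp a (left_mem_Icc.2 hab), hexp b (right_mem_Icc.2 hab), Real.exp_monotone.map_min]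
    _ ≤ Real.exp (ψ y) :=
        Real.exp_le_exp.2 <|
          min_le_of_hasDerivAt_div_of_antitoneOn hderiv (fun z _ => hw z) hanti hy
    _ = _ := (hexp y hy).symm

theorem exists_affine_eq {x₁ x₂ : ℝ} (h : x₁ ≠ x₂) (y₁ y₂ : ℝ) :
    ∃ q r : ℝ, q * x₁ + r = y₁ ∧ q * x₂ + r = y₂ := by
  have : x₂ - x₁ ≠ 0 := sub_ne_zero.2 h.symm
  exact ⟨(y₂ - y₁) / (x₂ - x₁), y₁ - (y₂ - y₁) / (x₂ - x₁) * x₁, by ring, by field_simp; ring⟩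

theorem pos_of_mem_Icc_of_affine_pos {q r a b y : ℝ} (ha : 0 < q * a + r) (hb : 0 < q * b + r)
    (hy : y ∈ Icc a b) : 0 < q * y + r := by
  rcases le_total 0 q with hq | hq <;> nlinarith [hy.1, hy.2]

theorem sq_sqrt_div_abs_mul {d N : ℝ} (hd : 0 ≤ d) (hN : N ≠ 0) : (√d / |N| * N) ^ 2 = d := by
  rw [mul_pow, div_pow, sq_abs, Real.sq_sqrt hd, div_mul_cancel₀ _ (pow_ne_zero 2 hN)]

theorem prod_add_inv_sub_mul_pow_card {ι : Type*} (J : Finset ι) (θ : ι → ℝ) {v y : ℝ}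
    (hy : y ≠ 0) : (∏ j ∈ J, (v + y⁻¹ - θ j)) * y ^ #J = ∏ j ∈ J, ((v - θ j) * y + 1) := by
  rw [prod_mul_pow_card]
  exact prod_congr rfl fun j _ => by field_simp; ring

theorem card_compl_pair {m : ℕ} {k₁ k₂ : Fin m} (hk : k₁ ≠ k₂) :
    #({k₁, k₂}ᶜ : Finset (Fin m)) = m - 2 := by
  rw [card_compl, card_pair hk, Fintype.card_fin]

theorem inv_sub_mem_Icc_of_mem_Iic_union_Ici {e₁ e₂ v x : ℝ} (h₁ : e₁ < v) (h₂ : v < e₂)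
    (hx : x ∈ Iic e₁ ∪ Ici e₂) : (x - v)⁻¹ ∈ Icc (e₁ - v)⁻¹ (e₂ - v)⁻¹ := by
  rcases hx with hx | hx
  · have hxv : x - v < 0 := by linarith [mem_Iic.1 hx]
    exact ⟨(inv_le_inv_of_neg (by linarith) hxv).2 (by linarith [mem_Iic.1 hx]),
      (inv_lt_zero.2 hxv).le.trans (inv_pos.2 (by linarith)).le⟩
  · have hxv : 0 < x - v := by linarith [mem_Ici.1 hx]
    exact ⟨(inv_lt_zero.2 (by linarith)).le.trans (inv_pos.2 hxv).le,
      inv_anti₀ (by linarith) (by linarith [mem_Ici.1 hx])⟩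

theorem sq_mul_prod_div_pow_add_inv {ι : Type*} (J : Finset ι) (θ : ι → ℝ) (q : ℝ)
    {v a b ρ y : ℝ} {M : ℕ} (hJ : #J + 1 = M) (hρ : (v - a) ^ 2 + b ^ 2 = ρ) (hρ0 : ρ ≠ 0)
    (hy : y ≠ 0) :
    (q * y⁻¹ * ∏ j ∈ J, (v + y⁻¹ - θ j)) ^ 2 / ((v + y⁻¹ - a) ^ 2 + b ^ 2) ^ M
      = q ^ 2 / ρ ^ M * ((∏ j ∈ J, ((v - θ j) * y + 1)) ^ 2
        / ((y - -(v - a) / ρ) ^ 2 + (b / ρ) ^ 2) ^ M) := by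
  have hnum : (q * y⁻¹ * ∏ j ∈ J, (v + y⁻¹ - θ j)) ^ 2 * (y ^ 2) ^ M
      = (q * ∏ j ∈ J, ((v - θ j) * y + 1)) ^ 2 := by
    rw [← prod_add_inv_sub_mul_pow_card J θ hy, ← hJ]
    field_simp
    ring
  have hden : ((v + y⁻¹ - a) ^ 2 + b ^ 2) ^ M * (y ^ 2) ^ M
      = ρ ^ M * ((y - -(v - a) / ρ) ^ 2 + (b / ρ) ^ 2) ^ M := by
    rw [← mul_pow, ← mul_pow]
    congr 1
    rw [← hρ] at hρ0 ⊢
    field_simp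
    ring
  rw [← mul_div_mul_right _ _ (pow_ne_zero M (pow_ne_zero 2 hy)), hnum, hden, mul_pow,
    mul_div_mul_comm]

theorem le_sq_affine_mul_prod_of_mem_Icc {ι : Type*} {J : Finset ι} {θ : ι → ℝ}
    {a b q r e₁ e₂ x : ℝ} {M : ℕ} (hb : b ≠ 0) (hJ : #J + 1 = M)
    (hθ : ∀ j ∈ J, θ j ∉ Icc e₁ e₂) (h₁ : 0 < q * e₁ + r) (h₂ : 0 < q * e₂ + r)
    (hend₁ : ((q * e₁ + r) * ∏ j ∈ J, (e₁ - θ j)) ^ 2 = ((e₁ - a) ^ 2 + b ^ 2) ^ M)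
    (hend₂ : ((q * e₂ + r) * ∏ j ∈ J, (e₂ - θ j)) ^ 2 = ((e₂ - a) ^ 2 + b ^ 2) ^ M)
    (hx : x ∈ Icc e₁ e₂) :
    ((x - a) ^ 2 + b ^ 2) ^ M ≤ ((q * x + r) * ∏ j ∈ J, (x - θ j)) ^ 2 := by
  set qf : Option ι → ℝ := fun o => o.elim q fun _ => 1
  set rf : Option ι → ℝ := fun o => o.elim r fun j => -θ j
  have hprod : ∀ y, ∏ i ∈ insertNone J, (qf i * y + rf i) = (q * y + r) * ∏ j ∈ J, (y - θ j) :=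
    fun y => by simp [prod_insertNone, qf, rf, sub_eq_add_neg]
  have hnz : ∀ i ∈ insertNone J, ∀ y ∈ Icc e₁ e₂, qf i * y + rf i ≠ 0 := by
    rintro (_ | j) hi y hy
    · exact (pos_of_mem_Icc_of_affine_pos h₁ h₂ hy).ne'
    · have : y - θ j ≠ 0 := sub_ne_zero.2 fun h => hθ j (by simpa using hi) (h ▸ hy)
      simpa [qf, rf, ← sub_eq_add_neg] using this
  have hmin := min_le_sq_prod_affine_div_pow _ qf rf (α := a) hb
    ((card_insertNone J).trans hJ).le hnz hx
  rwa [hprod, hprod, hprod, hend₁, hend₂, div_self (by positivity), div_self (by positivity),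
    min_self, one_le_div (by positivity)] at hmin

theorem le_sq_affine_mul_prod_of_mem_Iic_union_Ici {ι : Type*} {J : Finset ι} {θ : ι → ℝ}
    {a b q r e₁ e₂ x : ℝ} {M : ℕ} (hb : b ≠ 0) (hJ : #J + 1 = M) (he : e₁ < e₂)
    (hθ : ∀ j ∈ J, θ j ∈ Ioo e₁ e₂) (h₁ : q * e₁ + r < 0) (h₂ : 0 < q * e₂ + r)
    (hend₁ : ((q * e₁ + r) * ∏ j ∈ J, (e₁ - θ j)) ^ 2 = ((e₁ - a) ^ 2 + b ^ 2) ^ M)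
    (hend₂ : ((q * e₂ + r) * ∏ j ∈ J, (e₂ - θ j)) ^ 2 = ((e₂ - a) ^ 2 + b ^ 2) ^ M)
    (hx : x ∈ Iic e₁ ∪ Ici e₂) :
    ((x - a) ^ 2 + b ^ 2) ^ M ≤ ((q * x + r) * ∏ j ∈ J, (x - θ j)) ^ 2 := by
  have hq : 0 < q := pos_of_mul_pos_left (by linarith : 0 < q * (e₂ - e₁)) (by linarith)
  set v := -r / q
  have hℓ : ∀ x, q * x + r = q * (x - v) := fun x => by simp only [v]; field_simp; ring
  have hv₁ : e₁ < v := by nlinarith [hℓ e₁]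
  have hv₂ : v < e₂ := by nlinarith [hℓ e₂]
  set ρ := (v - a) ^ 2 + b ^ 2 with hρ
  have hρ0 : 0 < ρ := by positivity
  set G : ℝ → ℝ := fun y => (∏ j ∈ J, ((v - θ j) * y + 1)) ^ 2
    / ((y - -(v - a) / ρ) ^ 2 + (b / ρ) ^ 2) ^ M
  have hratio : ∀ y ≠ 0, ((q * (v + y⁻¹) + r) * ∏ j ∈ J, (v + y⁻¹ - θ j)) ^ 2
      / ((v + y⁻¹ - a) ^ 2 + b ^ 2) ^ M = q ^ 2 / ρ ^ M * G y := fun y hy => by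
    rw [hℓ, add_sub_cancel_left]
    exact sq_mul_prod_div_pow_add_inv J θ q hJ hρ.symm hρ0.ne' hy
  have hy₁ : (e₁ - v)⁻¹ < 0 := inv_lt_zero.2 (by linarith)
  have hy₂ : 0 < (e₂ - v)⁻¹ := inv_pos.2 (by linarith)
  have hfac : ∀ j ∈ J, ∀ y ∈ Icc (e₁ - v)⁻¹ (e₂ - v)⁻¹, (v - θ j) * y + 1 ≠ 0 := by
    intro j hj y hy
    have hval : ∀ e, e ≠ v → (v - θ j) * (e - v)⁻¹ + 1 = (e - θ j) / (e - v) := fun e he => by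
      have : e - v ≠ 0 := sub_ne_zero.2 he
      field_simp
      ring
    refine (pos_of_mem_Icc_of_affine_pos ?_ ?_ hy).ne'
    · rw [hval _ hv₁.ne]
      exact div_pos_of_neg_of_neg (by linarith [(hθ j hj).1]) (by linarith)
    · rw [hval _ hv₂.ne']
      exact div_pos (by linarith [(hθ j hj).2]) (by linarith)
  have hy := inv_sub_mem_Icc_of_mem_Iic_union_Ici hv₁ hv₂ hx
  have hmin : min (G (e₁ - v)⁻¹) (G (e₂ - v)⁻¹) ≤ G (x - v)⁻¹ :=
    min_le_sq_prod_affine_div_pow J (fun j => v - θ j) (fun _ => 1) (div_ne_zero hb hρ0.ne')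
      (by omega) hfac hy
  have hG : ∀ e ≠ v, q ^ 2 / ρ ^ M * G (e - v)⁻¹
      = ((q * e + r) * ∏ j ∈ J, (e - θ j)) ^ 2 / ((e - a) ^ 2 + b ^ 2) ^ M := fun e he => by
    rw [← hratio _ (inv_ne_zero (sub_ne_zero.2 he)), inv_inv, add_sub_cancel]
  have hκ : 0 ≤ q ^ 2 / ρ ^ M := by positivity
  have hxv : x ≠ v := by
    rcases hx with h | h
    exacts [(lt_of_le_of_lt h hv₁).ne, (hv₂.trans_le h).ne']
  rw [← one_le_div (by positivity), ← hG x hxv]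
  calc 1 = min (q ^ 2 / ρ ^ M * G (e₁ - v)⁻¹) (q ^ 2 / ρ ^ M * G (e₂ - v)⁻¹) := by
        rw [hG _ hv₁.ne, hG _ hv₂.ne', hend₁, hend₂, div_self (by positivity),
          div_self (by positivity), min_self]
    _ = q ^ 2 / ρ ^ M * min (G (e₁ - v)⁻¹) (G (e₂ - v)⁻¹) := (mul_min_of_nonneg _ _ hκ).symm
    _ ≤ q ^ 2 / ρ ^ M * G (x - v)⁻¹ := mul_le_mul_of_nonneg_left hmin hκ

-- `P / D` majorizes the indicator of `S` and interpolates the indicator of `K` at the nodes `θ`.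
structure IsIndicatorMajorant {m : ℕ} (D : ℝ → ℝ) (θ : Fin m → ℝ) (K : Finset (Fin m))
    (S : Set ℝ) (P : ℝ[X]) : Prop where
  natDegree_le : P.natDegree ≤ 2 * m - 2
  eval_nonneg : ∀ x, 0 ≤ P.eval x
  eval_node_of_notMem : ∀ j ∉ K, P.eval (θ j) = 0
  eval_node_of_mem : ∀ j ∈ K, P.eval (θ j) = D (θ j)
  le_eval : ∀ x ∈ S, D x ≤ P.eval x

theorem IsIndicatorMajorant.sum_le_sum {m n : ℕ} {D : ℝ → ℝ} {θ : Fin m → ℝ}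
    {K : Finset (Fin m)} {S : Set ℝ} {P : ℝ[X]} (hP : IsIndicatorMajorant D θ K S P)
    (hD : ∀ x, 0 < D x) {lam : Fin n → ℝ} {u : Fin n → ℝ} (hu : ∀ j, 0 ≤ u j) {v : Fin m → ℝ}
    (hquad : ∑ j, u j * (P.eval (lam j) / D (lam j)) = ∑ j, v j * (P.eval (θ j) / D (θ j)))
    (A : Finset (Fin n)) (hA : ∀ j ∈ A, lam j ∈ S) :
    ∑ j ∈ A, u j ≤ ∑ j ∈ K, v j :=
  calc ∑ j ∈ A, u j ≤ ∑ j ∈ A, u j * (P.eval (lam j) / D (lam j)) :=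
        Finset.sum_le_sum fun j hj => le_mul_of_one_le_right (hu j)
          ((one_le_div (hD _)).2 (hP.le_eval _ (hA j hj)))
    _ ≤ ∑ j, u j * (P.eval (lam j) / D (lam j)) :=
        sum_le_sum_of_subset_of_nonneg (subset_univ A) fun j _ _ =>
          mul_nonneg (hu j) (div_nonneg (hP.eval_nonneg _) (hD _).le)
    _ = ∑ j, v j * (P.eval (θ j) / D (θ j)) := hquad
    _ = ∑ j ∈ K, v j := by
        rw [← sum_subset (subset_univ K) fun j _ hj => by rw [hP.eval_node_of_notMem j hj]; simp]
        exact sum_congr rfl fun j hj => by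
          rw [hP.eval_node_of_mem j hj, div_self (hD _).ne', mul_one]

theorem isIndicatorMajorant_one (θ : Fin 1 → ℝ) (k : Fin 1) (a b : ℝ) :
    IsIndicatorMajorant (fun x => ((x - a) ^ 2 + b ^ 2) ^ (1 - 1)) θ {k} univ 1 where
  natDegree_le := by simp
  eval_nonneg := by simp
  eval_node_of_notMem j hj := absurd (mem_singleton.2 (Subsingleton.elim j k)) hj
  eval_node_of_mem := by simp
  le_eval := by simp

theorem isIndicatorMajorant_sq_affine_mul_prod {m : ℕ} {D : ℝ → ℝ} {θ : Fin m → ℝ}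
    {k₁ k₂ : Fin m} (hk : k₁ ≠ k₂) {S : Set ℝ} {q r : ℝ}
    (h₁ : ((q * θ k₁ + r) * ∏ j ∈ {k₁, k₂}ᶜ, (θ k₁ - θ j)) ^ 2 = D (θ k₁))
    (h₂ : ((q * θ k₂ + r) * ∏ j ∈ {k₁, k₂}ᶜ, (θ k₂ - θ j)) ^ 2 = D (θ k₂))
    (hS : ∀ x ∈ S, D x ≤ ((q * x + r) * ∏ j ∈ {k₁, k₂}ᶜ, (x - θ j)) ^ 2) :
    IsIndicatorMajorant D θ {k₁, k₂} S
      (((C q * X + C r) * ∏ j ∈ {k₁, k₂}ᶜ, (X - C (θ j))) ^ 2) := by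
  have heval : ∀ x, (((C q * X + C r) * ∏ j ∈ {k₁, k₂}ᶜ, (X - C (θ j))) ^ 2).eval x
      = ((q * x + r) * ∏ j ∈ {k₁, k₂}ᶜ, (x - θ j)) ^ 2 := fun x => by simp [eval_prod]
  refine ⟨?_, fun x => by rw [heval]; positivity, fun j hj => ?_, fun j hj => ?_, fun x hx => ?_⟩
  · have hm : 2 ≤ m := by simpa [card_pair hk] using card_le_univ ({k₁, k₂} : Finset (Fin m))
    set N : ℝ[X] := ∏ j ∈ ({k₁, k₂}ᶜ : Finset (Fin m)), (X - C (θ j))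
    have hN : N.natDegree = m - 2 := by
      rw [natDegree_prod_of_monic _ _ fun j _ => monic_X_sub_C _]
      simp only [natDegree_X_sub_C, sum_const, smul_eq_mul, mul_one]
      exact card_compl_pair hk
    calc _ ≤ 2 * ((C q * X + C r) * N).natDegree := natDegree_pow_le
      _ ≤ 2 * ((C q * X + C r).natDegree + N.natDegree) := Nat.mul_le_mul_left _ natDegree_mul_le
      _ ≤ 2 * m - 2 := by have := natDegree_linear_le (a := q) (b := r); omega
  · rw [heval, prod_eq_zero (mem_compl.2 hj) (sub_self _)]
    simp
  · rcases mem_insert.1 hj with rfl | hj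
    · rw [heval, h₁]
    · rw [mem_singleton.1 hj, heval, h₂]
  · rw [heval]; exact hS x hx

theorem exists_isIndicatorMajorant_Icc {m : ℕ} {θ : Fin m → ℝ} (hθ : StrictMono θ) {a b : ℝ}
    (hb : b ≠ 0) (k : Fin m) (hk : (k : ℕ) + 1 < m) :
    ∃ P, IsIndicatorMajorant (fun x => ((x - a) ^ 2 + b ^ 2) ^ (m - 1)) θ {k, ⟨k + 1, hk⟩}
      (Icc (θ k) (θ ⟨k + 1, hk⟩)) P := by
  set k' : Fin m := ⟨k + 1, hk⟩
  set J : Finset (Fin m) := {k, k'}ᶜ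
  have hkk' : k < k' := Fin.lt_def.2 (Nat.lt_succ_self _)
  have hJ : #J + 1 = m - 1 := by rw [card_compl_pair hkk'.ne]; omega
  have hout : ∀ j ∈ J, θ j ∉ Icc (θ k) (θ k') := by
    intro j hj hθj
    obtain ⟨hjk, hjk'⟩ : j ≠ k ∧ j ≠ k' := by simpa using Finset.mem_compl.1 hj
    have h₁ : k ≤ j := hθ.le_iff_le.1 hθj.1
    have h₂ : j ≤ k' := hθ.le_iff_le.1 hθj.2
    have : (j : ℕ) ≠ k := fun e => hjk (Fin.ext e)
    have : (j : ℕ) ≠ k + 1 := fun e => hjk' (Fin.ext e)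
    simp only [Fin.le_def, k'] at h₁ h₂
    omega
  have hN : ∀ x ∈ Icc (θ k) (θ k'), ∏ j ∈ J, (x - θ j) ≠ 0 := fun x hx =>
    prod_ne_zero_iff.2 fun j hj => sub_ne_zero.2 fun h => hout j hj (h ▸ hx)
  have hk₁ : θ k ∈ Icc (θ k) (θ k') := Set.left_mem_Icc.2 (hθ hkk').le
  have hk₂ : θ k' ∈ Icc (θ k) (θ k') := Set.right_mem_Icc.2 (hθ hkk').le
  set t : Fin m → ℝ := fun i => √(((θ i - a) ^ 2 + b ^ 2) ^ (m - 1)) / |∏ j ∈ J, (θ i - θ j)|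
  have ht₁ : 0 < t k := div_pos (Real.sqrt_pos.2 (by positivity)) (abs_pos.2 (hN _ hk₁))
  have ht₂ : 0 < t k' := div_pos (Real.sqrt_pos.2 (by positivity)) (abs_pos.2 (hN _ hk₂))
  obtain ⟨q, r, h₁, h₂⟩ := exists_affine_eq (hθ hkk').ne (t k) (t k')
  have hend₁ :
      ((q * θ k + r) * ∏ j ∈ J, (θ k - θ j)) ^ 2 = ((θ k - a) ^ 2 + b ^ 2) ^ (m - 1) := by
    rw [h₁]; exact sq_sqrt_div_abs_mul (by positivity) (hN _ hk₁)
  have hend₂ :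
      ((q * θ k' + r) * ∏ j ∈ J, (θ k' - θ j)) ^ 2 = ((θ k' - a) ^ 2 + b ^ 2) ^ (m - 1) := by
    rw [h₂]; exact sq_sqrt_div_abs_mul (by positivity) (hN _ hk₂)
  exact ⟨_, isIndicatorMajorant_sq_affine_mul_prod hkk'.ne hend₁ hend₂
    fun x hx => le_sq_affine_mul_prod_of_mem_Icc hb hJ hout (h₁ ▸ ht₁) (h₂ ▸ ht₂) hend₁ hend₂
      hx⟩

theorem exists_isIndicatorMajorant_Iic_union_Ici {m : ℕ} {θ : Fin m → ℝ} (hθ : StrictMono θ)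
    {a b : ℝ} (hb : b ≠ 0) (hm : 2 ≤ m) :
    ∃ P, IsIndicatorMajorant (fun x => ((x - a) ^ 2 + b ^ 2) ^ (m - 1)) θ
      {⟨0, by omega⟩, ⟨m - 1, by omega⟩}
      (Iic (θ ⟨0, by omega⟩) ∪ Ici (θ ⟨m - 1, by omega⟩)) P := by
  set k₁ : Fin m := ⟨0, by omega⟩
  set k₂ : Fin m := ⟨m - 1, by omega⟩
  set J : Finset (Fin m) := {k₁, k₂}ᶜ
  have hk : k₁ < k₂ := Fin.lt_def.2 (by simp only [k₁, k₂]; omega)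
  have hJ : #J + 1 = m - 1 := by rw [card_compl_pair hk.ne]; omega
  have hinner : ∀ j ∈ J, θ j ∈ Ioo (θ k₁) (θ k₂) := by
    intro j hj
    obtain ⟨h₁, h₂⟩ : j ≠ k₁ ∧ j ≠ k₂ := by simpa using Finset.mem_compl.1 hj
    have : (j : ℕ) ≠ 0 := fun e => h₁ (Fin.ext e)
    have : (j : ℕ) ≠ m - 1 := fun e => h₂ (Fin.ext e)
    exact ⟨hθ (Fin.lt_def.2 (by simp only [k₁]; omega)),
      hθ (Fin.lt_def.2 (by simp only [k₂]; omega))⟩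
  have hN₁ : ∏ j ∈ J, (θ k₁ - θ j) ≠ 0 :=
    prod_ne_zero_iff.2 fun j hj => sub_ne_zero.2 (hinner j hj).1.ne
  have hN₂ : ∏ j ∈ J, (θ k₂ - θ j) ≠ 0 :=
    prod_ne_zero_iff.2 fun j hj => sub_ne_zero.2 (hinner j hj).2.ne'
  set t : Fin m → ℝ := fun i => √(((θ i - a) ^ 2 + b ^ 2) ^ (m - 1)) / |∏ j ∈ J, (θ i - θ j)|
  have ht₁ : 0 < t k₁ := div_pos (Real.sqrt_pos.2 (by positivity)) (abs_pos.2 hN₁)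
  have ht₂ : 0 < t k₂ := div_pos (Real.sqrt_pos.2 (by positivity)) (abs_pos.2 hN₂)
  obtain ⟨q, r, h₁, h₂⟩ := exists_affine_eq (hθ hk).ne (-t k₁) (t k₂)
  have hend₁ :
      ((q * θ k₁ + r) * ∏ j ∈ J, (θ k₁ - θ j)) ^ 2 = ((θ k₁ - a) ^ 2 + b ^ 2) ^ (m - 1) := by
    rw [h₁, neg_mul, neg_sq]; exact sq_sqrt_div_abs_mul (by positivity) hN₁
  have hend₂ :
      ((q * θ k₂ + r) * ∏ j ∈ J, (θ k₂ - θ j)) ^ 2 = ((θ k₂ - a) ^ 2 + b ^ 2) ^ (m - 1) := by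
    rw [h₂]; exact sq_sqrt_div_abs_mul (by positivity) hN₂
  exact ⟨_, isIndicatorMajorant_sq_affine_mul_prod hk.ne hend₁ hend₂
    fun x hx => le_sq_affine_mul_prod_of_mem_Iic_union_Ici hb hJ (hθ hk) hinner
      (by linarith) (by linarith) hend₁ hend₂ hx⟩

theorem stmt_19_general {n m : ℕ} (hm : 0 < m)
    (lam : Fin n → ℝ)
    (w : Fin n → ℂ)
    (θ : Fin m → ℝ) (hθ : StrictMono θ) (c : Fin m → ℂ)
    (s : ℂ) (hs : s.im ≠ 0)
    (hquad : ∀ p : Polynomial ℝ, p.natDegree ≤ 2 * m - 2 →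
      ∑ j, ‖w j‖ ^ 2 * (p.eval (lam j) / ((lam j - s.re) ^ 2 + s.im ^ 2) ^ (m - 1))
        = ∑ j, ‖c j‖ ^ 2 * (p.eval (θ j) / ((θ j - s.re) ^ 2 + s.im ^ 2) ^ (m - 1))) :
    (∀ (k : Fin m) (hk : (k : ℕ) + 1 < m),
      (∑ j ∈ Finset.univ.filter fun j => θ k ≤ lam j ∧ lam j ≤ θ ⟨(k : ℕ) + 1, hk⟩,
          ‖w j‖ ^ 2)
        ≤ ‖c k‖ ^ 2 + ‖c ⟨(k : ℕ) + 1, hk⟩‖ ^ 2) ∧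
    (∑ j ∈ Finset.univ.filter fun j =>
        lam j ≤ θ ⟨0, hm⟩ ∨ θ ⟨m - 1, Nat.sub_lt hm Nat.one_pos⟩ ≤ lam j, ‖w j‖ ^ 2)
      ≤ ‖c ⟨0, hm⟩‖ ^ 2 + ‖c ⟨m - 1, Nat.sub_lt hm Nat.one_pos⟩‖ ^ 2 := by
  have bound : ∀ {K : Finset (Fin m)} {S : Set ℝ} {P : ℝ[X]},
      IsIndicatorMajorant (fun x => ((x - s.re) ^ 2 + s.im ^ 2) ^ (m - 1)) θ K S P →
      ∀ A : Finset (Fin n), (∀ j ∈ A, lam j ∈ S) → ∑ j ∈ A, ‖w j‖ ^ 2 ≤ ∑ j ∈ K, ‖c j‖ ^ 2 :=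
    fun hP => hP.sum_le_sum (fun x => by positivity) (u := fun j => ‖w j‖ ^ 2)
      (fun j => by positivity) (hquad _ hP.natDegree_le)
  refine ⟨fun k hk => ?_, ?_⟩
  · obtain ⟨P, hP⟩ := exists_isIndicatorMajorant_Icc hθ (a := s.re) hs k hk
    exact (bound hP _ fun j hj => (Finset.mem_filter.1 hj).2).trans_eq
      (Finset.sum_pair (by simp [Fin.ext_iff]))
  · obtain rfl | hm₂ := (by omega : m = 1 ∨ 2 ≤ m)
    · calc _ ≤ ∑ j ∈ {⟨0, hm⟩}, ‖c j‖ ^ 2 :=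
            bound (isIndicatorMajorant_one θ _ s.re s.im) _ fun j _ => Set.mem_univ _
        _ ≤ _ := by rw [Finset.sum_singleton]; exact le_add_of_nonneg_right (by positivity)
    · obtain ⟨P, hP⟩ := exists_isIndicatorMajorant_Iic_union_Ici hθ (a := s.re) hs hm₂
      exact (bound hP _ fun j hj => (Finset.mem_filter.1 hj).2).trans_eq
        (Finset.sum_pair (by simp [Fin.ext_iff]; omega))

/-- CMS-type upper bounds for rational Gaussian quadrature with a
single complex pole `s ∈ ℂ \ ℝ` of multiplicity `m−1` (denominator
`|q_{m−1}(λ)|² = ((λ−Re s)² + (Im s)²)^{m−1}`): if the quadrature identity holds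
for all numerators of degree `≤ 2m−2`, then
`μ_n([θ_k, θ_{k+1}]) ≤ ‖c k‖² + ‖c_{k+1}‖²` for `k = 1,…,m−1`, and
`μ_n((−∞, θ_1]) + μ_n([θ_m, ∞)) ≤ ‖c 1‖² + ‖c m‖²`. -/
theorem stmt_19 {n m : ℕ} (hm : 0 < m)
    (lam : Fin n → ℝ) (hlam : StrictMono lam)
    (w : Fin n → ℂ) (hw : ∀ j, w j ≠ 0)
    (θ : Fin m → ℝ) (hθ : StrictMono θ) (c : Fin m → ℂ)
    (s : ℂ) (hs : s.im ≠ 0)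
    (hquad : ∀ p : Polynomial ℝ, p.natDegree ≤ 2 * m - 2 →
      ∑ j, ‖w j‖ ^ 2 * (p.eval (lam j) / ((lam j - s.re) ^ 2 + s.im ^ 2) ^ (m - 1))
        = ∑ j, ‖c j‖ ^ 2 * (p.eval (θ j) / ((θ j - s.re) ^ 2 + s.im ^ 2) ^ (m - 1))) :
    (∀ (k : Fin m) (hk : (k : ℕ) + 1 < m),
      (∑ j ∈ Finset.univ.filter fun j => θ k ≤ lam j ∧ lam j ≤ θ ⟨(k : ℕ) + 1, hk⟩,
          ‖w j‖ ^ 2)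
        ≤ ‖c k‖ ^ 2 + ‖c ⟨(k : ℕ) + 1, hk⟩‖ ^ 2) ∧
    (∑ j ∈ Finset.univ.filter fun j =>
        lam j ≤ θ ⟨0, hm⟩ ∨ θ ⟨m - 1, Nat.sub_lt hm Nat.one_pos⟩ ≤ lam j, ‖w j‖ ^ 2)
      ≤ ‖c ⟨0, hm⟩‖ ^ 2 + ‖c ⟨m - 1, Nat.sub_lt hm Nat.one_pos⟩‖ ^ 2 :=
  stmt_19_general hm lam w θ hθ c s hs hquad
end
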